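/- arXiv:1205.6442 — 9 statements merged into one kernel-verified Lean document; each statement's English description precedes it below -/
import Mathlib

section
/- Let S = {x ∈ ℝⁿ : hᵢ(x) = 0 for i ∈ [m₁], gⱼ(x) ≥ 0 for j ∈ [m₂]} where hᵢ, gⱼ are polynomials, and let S̃₀ = {(x₀,x) ∈ ℝ^{n+1} : hᵢ^hom(x₀,x) = 0, gⱼ^hom(x₀,x) ≥ 0, x₀ > 0}, where f^hom(x₀,x) = x₀^{deg f} f(x/x₀) denotes homogenization. Then for any polynomial f ∈ ℝ[x], f(x) ≥ 0 for all x ∈ S if and only if f^hom(x̃) ≥ 0 for all x̃ in the closure of S̃₀ in ℝ^{n+1}. -/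
/-!
A homogeneous polynomial `H` of degree `d` satisfies `H (c • y) = c ^ d * H y`, so for `c > 0`
the sign of `H` is constant along the open ray through `y`. Every point of `S̃₀` is such a positive
multiple `c • (1, x)`, and `c • (1, x) ∈ S̃₀` exactly when `x ∈ S`, where `F (1, x) = f x`. Hence
`f ≥ 0` on `S` iff `F ≥ 0` on `S̃₀`, and the closed condition `F ≥ 0` passes to the closure.
-/

open MvPolynomial

namespace MvPolynomial.IsHomogeneous

variable {σ R : Type*} {d : ℕ}

section CommSemiring

variable [CommSemiring R] {φ : MvPolynomial σ R}

theorem eval_smul (hφ : φ.IsHomogeneous d) (c : R) (x : σ → R) :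
    eval (c • x) φ = c ^ d * eval x φ := by
  rw [eval_eq, eval_eq, Finset.mul_sum]
  refine Finset.sum_congr rfl fun m hm => ?_
  simp only [Pi.smul_apply, smul_eq_mul, mul_pow, Finset.prod_mul_distrib,
    Finset.prod_pow_eq_pow_sum, ← hφ.degree_eq_sum_deg_support hm]
  ring

end CommSemiring

variable [CommRing R] [LinearOrder R] [IsStrictOrderedRing R] {φ : MvPolynomial σ R} {c : R}

theorem eval_smul_eq_zero_iff (hφ : φ.IsHomogeneous d) (hc : 0 < c) (x : σ → R) :
    eval (c • x) φ = 0 ↔ eval x φ = 0 := by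
  rw [hφ.eval_smul, mul_eq_zero, or_iff_right (pow_pos hc d).ne']

theorem eval_smul_nonneg_iff (hφ : φ.IsHomogeneous d) (hc : 0 < c) (x : σ → R) :
    0 ≤ eval (c • x) φ ↔ 0 ≤ eval x φ := by
  rw [hφ.eval_smul, mul_nonneg_iff_of_pos_left (pow_pos hc d)]

end MvPolynomial.IsHomogeneous

theorem Fin.smul_cons_one_inv_smul_tail {K : Type*} [DivisionRing K] {n : ℕ}
    {v : Fin (n + 1) → K} (hv : v 0 ≠ 0) :
    v 0 • Fin.cons (1 : K) ((v 0)⁻¹ • Fin.tail v) = v := by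
  ext i
  refine Fin.cases ?_ (fun i => ?_) i <;> simp [Fin.tail, hv]

/-- `f ≥ 0` on `S` iff `f^hom ≥ 0` on the closure of `S̃₀`.
Homogenizations are characterized by being homogeneous of the right degree and
agreeing with the original polynomial on the slice `x₀ = 1`. -/
theorem nonneg_on_S_iff_hom_nonneg_on_closure
    (n m₁ m₂ : ℕ)
    (h : Fin m₁ → MvPolynomial (Fin n) ℝ) (g : Fin m₂ → MvPolynomial (Fin n) ℝ)
    (f : MvPolynomial (Fin n) ℝ)
    (Hh : Fin m₁ → MvPolynomial (Fin (n + 1)) ℝ)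
    (Hg : Fin m₂ → MvPolynomial (Fin (n + 1)) ℝ)
    (F : MvPolynomial (Fin (n + 1)) ℝ)
    (hHh : ∀ i, (Hh i).IsHomogeneous (h i).totalDegree)
    (hHh1 : ∀ i, ∀ x : Fin n → ℝ, eval (Fin.cons 1 x) (Hh i) = eval x (h i))
    (hHg : ∀ j, (Hg j).IsHomogeneous (g j).totalDegree)
    (hHg1 : ∀ j, ∀ x : Fin n → ℝ, eval (Fin.cons 1 x) (Hg j) = eval x (g j))
    (hF : F.IsHomogeneous f.totalDegree)
    (hF1 : ∀ x : Fin n → ℝ, eval (Fin.cons 1 x) F = eval x f)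
    (S : Set (Fin n → ℝ))
    (hS : S = {x | (∀ i, eval x (h i) = 0) ∧ ∀ j, 0 ≤ eval x (g j)})
    (S0 : Set (Fin (n + 1) → ℝ))
    (hS0 : S0 = {xt | (∀ i, eval xt (Hh i) = 0) ∧ (∀ j, 0 ≤ eval xt (Hg j)) ∧ 0 < xt 0}) :
    (∀ x ∈ S, 0 ≤ eval x f) ↔ (∀ xt ∈ closure S0, 0 ≤ eval xt F) := by
  have mem_S0_iff : ∀ {c : ℝ}, 0 < c → ∀ x : Fin n → ℝ, c • Fin.cons 1 x ∈ S0 ↔ x ∈ S := by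
    intro c hc x
    simp [hS0, hS, (hHh _).eval_smul_eq_zero_iff hc, (hHg _).eval_smul_nonneg_iff hc, hHh1, hHg1,
      hc]
  constructor
  · intro hf
    suffices hF0 : ∀ xt ∈ S0, 0 ≤ eval xt F from
      fun xt hxt => closure_minimal hF0 (isClosed_le continuous_const (continuous_eval F)) hxt
    intro xt hxt
    have hpos : 0 < xt 0 := by rw [hS0] at hxt; exact hxt.2.2
    rw [← Fin.smul_cons_one_inv_smul_tail hpos.ne'] at hxt ⊢
    rw [hF.eval_smul_nonneg_iff hpos, hF1]
    exact hf _ ((mem_S0_iff hpos _).1 hxt)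
  · intro hF0 x hx
    rw [← hF1]
    simpa using hF0 _ (subset_closure ((mem_S0_iff one_pos x).2 hx))
end

section
/- Suppose deg p > deg q and let d = deg p. If (u₀,u) ∈ ℝ^{n+1} satisfies q̃(u₀,u) = 1 where q̃(x₀,x) = x₀^d q(x/x₀), then u₀ ≠ 0. Consequently, for the constrained homogenized problem with constraint q̃ = 1 (and the homogenized equality/inequality constraints and x₀ ≥ 0), every feasible point has x₀ > 0 and p̃(u₀,u) = p(u/u₀)/q(u/u₀), hence s* = r*. -/
/-!
A homogeneous `Q` of degree `d` splits as `Q = ∑ₖ x₀ᵏ Qₖ` with `Qₖ` homogeneous of degree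
`d - k`, so its dehomogenization is `q = Q(1, ·) = ∑ₖ Qₖ`, whose degree-`d` component is `Q₀`.
When `deg q < d` this component vanishes, so `Q(0, x) = Q₀(x) = 0` and `Q = 1` forces `x₀ ≠ 0`.
A feasible `u` is then `u₀ • (1, x)` with `u₀ > 0` and `x = u / u₀`; by homogeneity every
constraint keeps its sign under this rescaling, while `1 = Q(u) = u₀ᵈ q(x)` gives
`P(u) = u₀ᵈ p(x) = p(x) / q(x)`. Conversely a feasible `x` yields the feasible point `t • (1, x)`
with `t = q(x)^(-1/d)`. Hence both problems have the same sets of values.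
-/

open MvPolynomial

structure IsHomogenization {R : Type*} [CommSemiring R] {n : ℕ}
    (F : MvPolynomial (Fin (n + 1)) R) (f : MvPolynomial (Fin n) R) (k : ℕ) : Prop where
  isHomogeneous : F.IsHomogeneous k
  eval_cons_one : ∀ x : Fin n → R, eval (Fin.cons 1 x) F = eval x f

theorem MvPolynomial.IsHomogeneous.eval_smul_s4 {R σ : Type*} [CommSemiring R]
    {F : MvPolynomial σ R} {k : ℕ} (hF : F.IsHomogeneous k) (t : R) (v : σ → R) :
    eval (t • v) F = t ^ k * eval v F := by
  simp only [eval_eq, Finset.mul_sum]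
  refine Finset.sum_congr rfl fun α hα => ?_
  simp only [Pi.smul_apply, smul_eq_mul, mul_pow, Finset.prod_mul_distrib,
    Finset.prod_pow_eq_pow_sum, ← hF.degree_eq_sum_deg_support hα]
  ring

theorem MvPolynomial.IsHomogeneous.homogeneousComponent_eval_one_finSuccEquiv
    {R : Type*} [CommSemiring R] {n k : ℕ} {Q : MvPolynomial (Fin (n + 1)) R}
    (hQ : Q.IsHomogeneous k) :
    homogeneousComponent k ((finSuccEquiv R n Q).eval 1) = (finSuccEquiv R n Q).coeff 0 := by
  have hnat : (finSuccEquiv R n Q).natDegree < k + 1 := by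
    rw [natDegree_finSuccEquiv]
    exact Nat.lt_succ_of_le ((degreeOf_le_totalDegree Q 0).trans hQ.totalDegree_le)
  rw [Polynomial.eval_eq_sum_range' hnat, map_sum, Finset.sum_eq_single 0]
  · simp [homogeneousComponent_eq_self (hQ.finSuccEquiv_coeff_isHomogeneous 0 k (zero_add k))]
  · intro i hi hi0
    have hik : i ≤ k := Nat.lt_succ_iff.mp (Finset.mem_range.mp hi)
    rw [one_pow, mul_one, homogeneousComponent_of_mem
      (hQ.finSuccEquiv_coeff_isHomogeneous i (k - i) (by omega)), if_neg (by omega)]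
  · simp

theorem Fin.smul_cons_one_div {K : Type*} [Field K] {n : ℕ} {u : Fin (n + 1) → K}
    (hu : u 0 ≠ 0) : u 0 • (Fin.cons 1 fun i => u i.succ / u 0 : Fin (n + 1) → K) = u := by
  ext i
  refine Fin.cases ?_ (fun j => ?_) i
  · simp
  · simp [mul_div_cancel₀ _ hu]

theorem exists_pos_pow_mul_eq_one {a : ℝ} (ha : 0 < a) {d : ℕ} (hd : d ≠ 0) :
    ∃ t : ℝ, 0 < t ∧ t ^ d * a = 1 :=
  ⟨a⁻¹ ^ (d⁻¹ : ℝ), by positivity,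
    by rw [Real.rpow_inv_natCast_pow (inv_pos.2 ha).le hd, inv_mul_cancel₀ ha.ne']⟩

namespace IsHomogenization

section CommSemiring

variable {R : Type*} [CommSemiring R] {n k : ℕ} {F : MvPolynomial (Fin (n + 1)) R}
  {f : MvPolynomial (Fin n) R} {t : R} {x : Fin n → R}

theorem eval_smul_cons_one (hF : IsHomogenization F f k) :
    eval (t • Fin.cons 1 x : Fin (n + 1) → R) F = t ^ k * eval x f := by
  rw [hF.isHomogeneous.eval_smul_s4, hF.eval_cons_one]

theorem eval_smul_cons_one_eq_zero_iff [NoZeroDivisors R] (hF : IsHomogenization F f k)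
    (ht : t ≠ 0) : eval (t • Fin.cons 1 x : Fin (n + 1) → R) F = 0 ↔ eval x f = 0 := by
  rw [hF.eval_smul_cons_one, mul_eq_zero, or_iff_right (pow_ne_zero _ ht)]

theorem eval_smul_cons_one_nonneg_iff [LinearOrder R] [IsStrictOrderedRing R]
    (hF : IsHomogenization F f k) (ht : 0 < t) :
    0 ≤ eval (t • Fin.cons 1 x : Fin (n + 1) → R) F ↔ 0 ≤ eval x f := by
  rw [hF.eval_smul_cons_one, mul_nonneg_iff_of_pos_left (pow_pos ht _)]

end CommSemiring

theorem eval_eq_zero_of_head_eq_zero {R : Type*} [CommRing R] [IsDomain R] [Infinite R]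
    {n k : ℕ} {F : MvPolynomial (Fin (n + 1)) R} {f : MvPolynomial (Fin n) R}
    (hF : IsHomogenization F f k) (hlt : f.totalDegree < k) {u : Fin (n + 1) → R}
    (hu : u 0 = 0) : eval u F = 0 := by
  set Φ := finSuccEquiv R n F
  have hΦ : Φ.eval 1 = f := funext fun x => by
    rw [eval_polynomial_eval_finSuccEquiv, map_one, ← hF.eval_cons_one x]; rfl
  -- The `x₀`-free part of `F` survives in `f` as its component of degree `k > deg f`.
  have hcoeff : Φ.coeff 0 = 0 := by
    rw [← hF.isHomogeneous.homogeneousComponent_eval_one_finSuccEquiv, hΦ,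
      homogeneousComponent_eq_zero _ _ hlt]
  rw [← Fin.cons_self_tail u, hu, eval_eq_eval_mv_eval', Polynomial.eval_zero_map,
    ← Polynomial.coeff_zero_eq_eval_zero, hcoeff, map_zero]

section Field

variable {K : Type*} [Field K] {n k : ℕ} {P Q : MvPolynomial (Fin (n + 1)) K}
  {p q : MvPolynomial (Fin n) K}

theorem eval_smul_cons_one_eq_div (hP : IsHomogenization P p k) (hQ : IsHomogenization Q q k)
    {t : K} {x : Fin n → K} (h : eval (t • Fin.cons 1 x : Fin (n + 1) → K) Q = 1) :
    eval (t • Fin.cons 1 x : Fin (n + 1) → K) P = eval x p / eval x q := by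
  rw [hQ.eval_smul_cons_one] at h
  rw [hP.eval_smul_cons_one, eq_div_iff (right_ne_zero_of_mul_eq_one h)]
  linear_combination eval x p * h

theorem eval_eq_div_of_head_ne_zero (hP : IsHomogenization P p k) (hQ : IsHomogenization Q q k)
    {u : Fin (n + 1) → K} (hu : u 0 ≠ 0) (hQu : eval u Q = 1) :
    eval u P = eval (fun i => u i.succ / u 0) p / eval (fun i => u i.succ / u 0) q := by
  rw [← Fin.smul_cons_one_div hu] at hQu
  have := hP.eval_smul_cons_one_eq_div hQ hQu
  rwa [Fin.smul_cons_one_div hu] at this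

end Field

end IsHomogenization

/-- if `deg p > deg q` and `d = deg p`, then any point with
`q̃(u₀,u) = 1` has `u₀ ≠ 0`; consequently every feasible point of the
homogenized problem has `x₀ > 0` with `p̃(u₀,u) = p(u/u₀)/q(u/u₀)`,
and hence `s* = r*`. -/
theorem deg_p_gt_deg_q_equivalence
    (n m₁ m₂ : ℕ)
    (p q : MvPolynomial (Fin n) ℝ)
    (h : Fin m₁ → MvPolynomial (Fin n) ℝ) (g : Fin m₂ → MvPolynomial (Fin n) ℝ)
    (d : ℕ) (hd : d = p.totalDegree) (hdeg : q.totalDegree < p.totalDegree)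
    (P Q : MvPolynomial (Fin (n + 1)) ℝ)
    (hP : P.IsHomogeneous d)
    (hP1 : ∀ x : Fin n → ℝ, eval (Fin.cons 1 x) P = eval x p)
    (hQ : Q.IsHomogeneous d)
    (hQ1 : ∀ x : Fin n → ℝ, eval (Fin.cons 1 x) Q = eval x q)
    (Hh : Fin m₁ → MvPolynomial (Fin (n + 1)) ℝ)
    (Hg : Fin m₂ → MvPolynomial (Fin (n + 1)) ℝ)
    (hHh : ∀ i, (Hh i).IsHomogeneous (h i).totalDegree)
    (hHh1 : ∀ i, ∀ x : Fin n → ℝ, eval (Fin.cons 1 x) (Hh i) = eval x (h i))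
    (hHg : ∀ j, (Hg j).IsHomogeneous (g j).totalDegree)
    (hHg1 : ∀ j, ∀ x : Fin n → ℝ, eval (Fin.cons 1 x) (Hg j) = eval x (g j))
    (sfeas : (Fin (n + 1) → ℝ) → Prop)
    (hsfeas : ∀ xt, sfeas xt ↔
      (∀ i, eval xt (Hh i) = 0) ∧ eval xt Q = 1 ∧
        (∀ j, 0 ≤ eval xt (Hg j)) ∧ 0 ≤ xt 0)
    (rfeas : (Fin n → ℝ) → Prop)
    (hrfeas : ∀ x, rfeas x ↔
      (∀ i, eval x (h i) = 0) ∧ (∀ j, 0 ≤ eval x (g j)) ∧ 0 < eval x q) :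
    (∀ u : Fin (n + 1) → ℝ, eval u Q = 1 → u 0 ≠ 0) ∧
    (∀ u : Fin (n + 1) → ℝ, sfeas u → 0 < u 0 ∧
      eval u P =
        eval (fun i : Fin n => u i.succ / u 0) p /
          eval (fun i : Fin n => u i.succ / u 0) q) ∧
    (⨅ xt : {xt : Fin (n + 1) → ℝ // sfeas xt}, ((eval xt.1 P : ℝ) : EReal)) =
      ⨅ x : {x : Fin n → ℝ // rfeas x},
        ((eval x.1 p / eval x.1 q : ℝ) : EReal) := by
  have hP' : IsHomogenization P p d := ⟨hP, hP1⟩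
  have hQ' : IsHomogenization Q q d := ⟨hQ, hQ1⟩
  have head_ne : ∀ u : Fin (n + 1) → ℝ, eval u Q = 1 → u 0 ≠ 0 := fun u hu h0 =>
    one_ne_zero (hu.symm.trans (hQ'.eval_eq_zero_of_head_eq_zero (hd ▸ hdeg) h0))
  have head_pos : ∀ u, sfeas u → 0 < u 0 := fun u hu =>
    ((hsfeas u).1 hu).2.2.2.lt_of_ne' (head_ne u ((hsfeas u).1 hu).2.1)
  have value_eq : ∀ u, sfeas u → eval u P = eval (fun i : Fin n => u i.succ / u 0) p /
      eval (fun i : Fin n => u i.succ / u 0) q := fun u hu =>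
    hP'.eval_eq_div_of_head_ne_zero hQ' (head_pos u hu).ne' ((hsfeas u).1 hu).2.1
  have sfeas_smul_iff {t : ℝ} (ht : 0 < t) (x : Fin n → ℝ) :
      sfeas (t • Fin.cons 1 x) ↔ rfeas x ∧ t ^ d * eval x q = 1 := by
    simp only [hsfeas, hrfeas, hQ'.eval_smul_cons_one, Pi.smul_apply, Fin.cons_zero,
      smul_eq_mul, mul_one, ht.le, and_true,
      IsHomogenization.eval_smul_cons_one_eq_zero_iff ⟨hHh _, hHh1 _⟩ ht.ne',
      IsHomogenization.eval_smul_cons_one_nonneg_iff ⟨hHg _, hHg1 _⟩ ht]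
    exact ⟨fun ⟨hh, hq, hg⟩ =>
        ⟨⟨hh, hg, pos_of_mul_pos_right (hq ▸ one_pos) (pow_pos ht d).le⟩, hq⟩,
      fun ⟨⟨hh, hg, _⟩, hq⟩ => ⟨hh, hq, hg⟩⟩
  refine ⟨head_ne, fun u hu => ⟨head_pos u hu, value_eq u hu⟩, le_antisymm ?_ ?_⟩
  · refine iInf_mono' fun x => ?_
    obtain ⟨t, ht, htq⟩ :=
      exists_pos_pow_mul_eq_one ((hrfeas x.1).1 x.2).2.2 (d := d) (by omega)
    have hfeas := (sfeas_smul_iff ht x.1).2 ⟨x.2, htq⟩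
    exact ⟨⟨_, hfeas⟩, EReal.coe_le_coe_iff.2
      (hP'.eval_smul_cons_one_eq_div hQ' ((hsfeas _).1 hfeas).2.1).le⟩
  · refine iInf_mono' fun u => ⟨⟨_, ?_⟩, EReal.coe_le_coe_iff.2 (value_eq u.1 u.2).ge⟩
    have hu := u.2
    rw [← Fin.smul_cons_one_div (head_pos u.1 u.2).ne'] at hu
    exact ((sfeas_smul_iff (head_pos u.1 u.2) _).1 hu).1
end

section
/- The set S = {(x₁,x₂) ∈ ℝ² : x₁²(x₁ − x₂) = 1, x₁ − 1 ≥ 0} is not closed at infinity: the point (0,0,1) belongs to S̃ = {(x₀,x₁,x₂) ∈ ℝ³ : x₁²(x₁−x₂) − x₀³ = 0, x₁ − x₀ ≥ 0, x₀ ≥ 0}, but there is no sequence in S̃ with x₀ > 0 converging to (0,0,1). -/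
open Filter

/-- the set `S = {x₁²(x₁−x₂)=1, x₁ ≥ 1}` is not closed at infinity:
`(0,0,1)` lies in the homogenized set `S̃`, but is not the limit of any sequence
of points of `S̃` with positive first coordinate. -/
theorem example_not_closed_at_infinity :
    ((0 : ℝ), (0 : ℝ), (1 : ℝ)) ∈
      {v : ℝ × ℝ × ℝ |
        v.2.1 ^ 2 * (v.2.1 - v.2.2) - v.1 ^ 3 = 0 ∧ 0 ≤ v.2.1 - v.1 ∧ 0 ≤ v.1} ∧
    ¬ ∃ u : ℕ → ℝ × ℝ × ℝ,
      (∀ k, u k ∈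
          {v : ℝ × ℝ × ℝ |
            v.2.1 ^ 2 * (v.2.1 - v.2.2) - v.1 ^ 3 = 0 ∧
              0 ≤ v.2.1 - v.1 ∧ 0 ≤ v.1} ∧
        0 < (u k).1) ∧
      Tendsto u atTop (nhds ((0 : ℝ), (0 : ℝ), (1 : ℝ))) := by
  constructor
  · refine ⟨by norm_num, by norm_num, le_rfl⟩
  · rintro ⟨u, hmem, htend⟩
    -- the second minus third coordinate tends to -1
    have h2 : Tendsto (fun k => (u k).2.1 - (u k).2.2) atTop (nhds (0 - 1)) := by
      exact ((continuous_snd.fst.sub continuous_snd.snd).continuousAt).tendsto.comp htend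
    rw [show (0:ℝ) - 1 = -1 by norm_num] at h2
    have hev : ∀ᶠ k in atTop, (u k).2.1 - (u k).2.2 < 0 :=
      h2.eventually_lt_const (by norm_num)
    obtain ⟨k, hk⟩ := hev.exists
    obtain ⟨⟨heq, hge, _⟩, hpos⟩ := hmem k
    have hb : 0 < (u k).2.1 := lt_of_lt_of_le hpos (by linarith)
    nlinarith [sq_nonneg ((u k).2.1), pow_pos hpos 3, mul_pos (mul_pos hb hb) (neg_pos.2 hk)]
end

section
/- Let S ⊆ ℝⁿ be defined by polynomial constraints and suppose S is not closed at infinity, witnessed by a nonzero point (0,u) ∈ S̃ that is not in the closure of S̃₀ = {x̃ ∈ S̃ : x₀ > 0}. Then there exists δ > 0 such that every point (x₀,x) in the closed ball of radius δ around (0,u) that satisfies hᵢ^hom(x₀,x) = 0 for all i ∈ [m₁] and gⱼ^hom(x₀,x) = 0 for all j ∈ J(u) has x₀ ≤ 0, where J(u) = {j ∈ [m₂] : gⱼ^hom(0,u) = 0}. -/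
open MvPolynomial

/-- if `S` is not closed at infinity, witnessed by a nonzero point
`(0,u) ∈ S̃ \ closure S̃₀`, then there is `δ > 0` such that every point of the
closed `δ`-ball around `(0,u)` satisfying all `hᵢ^hom = 0` and `g_j^hom = 0` for
`j ∈ J(u)` has nonpositive first coordinate. -/
theorem separation_lemma_not_closed_at_infinity
    (n m₁ m₂ : ℕ)
    (h : Fin m₁ → MvPolynomial (Fin n) ℝ) (g : Fin m₂ → MvPolynomial (Fin n) ℝ)
    (Hh : Fin m₁ → MvPolynomial (Fin (n + 1)) ℝ)
    (Hg : Fin m₂ → MvPolynomial (Fin (n + 1)) ℝ)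
    (hHh : ∀ i, (Hh i).IsHomogeneous (h i).totalDegree)
    (hHh1 : ∀ i, ∀ x : Fin n → ℝ, eval (Fin.cons 1 x) (Hh i) = eval x (h i))
    (hHg : ∀ j, (Hg j).IsHomogeneous (g j).totalDegree)
    (hHg1 : ∀ j, ∀ x : Fin n → ℝ, eval (Fin.cons 1 x) (Hg j) = eval x (g j))
    (Stilde S0 : Set (Fin (n + 1) → ℝ))
    (hStilde : Stilde = {xt | (∀ i, eval xt (Hh i) = 0) ∧
      (∀ j, 0 ≤ eval xt (Hg j)) ∧ 0 ≤ xt 0})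
    (hS0 : S0 = {xt | (∀ i, eval xt (Hh i) = 0) ∧
      (∀ j, 0 ≤ eval xt (Hg j)) ∧ 0 < xt 0})
    (ut : Fin (n + 1) → ℝ) (hu0 : ut 0 = 0) (hune : ut ≠ 0)
    (huS : ut ∈ Stilde) (hunotcl : ut ∉ closure S0) :
    ∃ δ : ℝ, 0 < δ ∧ ∀ xt : Fin (n + 1) → ℝ,
      dist xt ut ≤ δ →
      (∀ i, eval xt (Hh i) = 0) →
      (∀ j, eval ut (Hg j) = 0 → eval xt (Hg j) = 0) →
      xt 0 ≤ 0 := by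
  have hcont : ∀ j, Continuous fun xt : Fin (n + 1) → ℝ => eval xt (Hg j) := by
    intro j
    exact (Hg j).continuous_eval
  set U : Set (Fin (n + 1) → ℝ) :=
    (closure S0)ᶜ ∩ ⋂ j, {xt | eval ut (Hg j) ≠ 0 → 0 < eval xt (Hg j)} with hU
  have hopen : IsOpen U := by
    refine isClosed_closure.isOpen_compl.inter (isOpen_iInter_of_finite fun j => ?_)
    by_cases hj : eval ut (Hg j) = 0
    · have : {xt : Fin (n + 1) → ℝ | eval ut (Hg j) ≠ 0 → 0 < eval xt (Hg j)} = Set.univ := by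
        ext xt; simp [hj]
      rw [this]; exact isOpen_univ
    · have : {xt : Fin (n + 1) → ℝ | eval ut (Hg j) ≠ 0 → 0 < eval xt (Hg j)}
        = {xt | 0 < eval xt (Hg j)} := by ext xt; simp [hj]
      rw [this]; exact isOpen_lt continuous_const (hcont j)
  have huU : ut ∈ U := by
    rw [hStilde] at huS
    refine ⟨hunotcl, Set.mem_iInter.2 fun j hj => ?_⟩
    exact lt_of_le_of_ne (huS.2.1 j) (Ne.symm hj)
  obtain ⟨ε, hε, hball⟩ := Metric.isOpen_iff.1 hopen ut huU
  refine ⟨ε / 2, by linarith, fun xt hdist hh hg => ?_⟩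
  have hxU : xt ∈ U := hball (by
    rw [Metric.mem_ball]; linarith)
  by_contra hpos
  push_neg at hpos
  have hxS0 : xt ∈ S0 := by
    rw [hS0]
    refine ⟨hh, fun j => ?_, hpos⟩
    by_cases hj : eval ut (Hg j) = 0
    · rw [hg j hj]
    · exact le_of_lt ((Set.mem_iInter.1 hxU.2 j) hj)
  exact hxU.1 (subset_closure hxS0)
end

section
/- Under the hypotheses of the previous lemma (S not closed at infinity, witness point (0,u)), if m := m₁ + |J(u)| < n + 1, then the m × n Jacobian matrix A(u) whose rows are the gradients (in x₁,…,xₙ) of ĥ₁,…,ĥ_{m₁} and ĝⱼ (j ∈ J(u)) evaluated at u has rank strictly less than m. -/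
/-!
If the Jacobian of the top-degree parts at `u` had full rank, then, since `∂H/∂x_{k+1}` at
`(0, u)` equals `∂ĥ/∂x_k` at `u` for a homogenization `H` of `h`, the map
`x ↦ (x₀, (Hh i x)ᵢ, (Hg j x)_{j ∈ J(u)})` would be a submersion at `(0, u)`. By the implicit
function theorem it is then open there, so points with `x₀ > 0` on which all active constraints
vanish accumulate at `(0, u)`. The inactive constraints stay positive nearby, hence `(0, u)`
would lie in the closure of `S₀`.
-/

open MvPolynomial Filter Topology

theorem HasStrictFDerivAt.frequently_fst_lt_and_snd_eq {E F : Type*} [NormedAddCommGroup E]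
    [NormedSpace ℝ E] [CompleteSpace E] [NormedAddCommGroup F] [NormedSpace ℝ F] [CompleteSpace F]
    {f : E → ℝ × F} {f' : E →L[ℝ] ℝ × F} {a : E} (hf : HasStrictFDerivAt f f' a)
    (hf' : Function.Surjective f') :
    ∃ᶠ x in 𝓝 a, (f a).1 < (f x).1 ∧ (f x).2 = (f a).2 := by
  rw [← frequently_map (P := fun y : ℝ × F => (f a).1 < y.1 ∧ y.2 = (f a).2),
    hf.map_nhds_eq_of_surj (LinearMap.range_eq_top.mpr hf')]
  have hline : Tendsto (fun t => (t, (f a).2)) (𝓝[>] (f a).1) (𝓝 (f a)) :=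
    ((continuous_id.prodMk continuous_const).tendsto' _ _ rfl).mono_left nhdsWithin_le_nhds
  exact hline.frequently (eventually_mem_nhdsWithin.mono fun t ht => ⟨ht, rfl⟩).frequently

namespace Matrix

theorem mulVec_surjective_of_card_height_le_rank {K m n : Type*} [Field K] [Finite m]
    [Fintype n] (A : Matrix m n K) (h : Nat.card m ≤ A.rank) :
    Function.Surjective A.mulVec := by
  have := Fintype.ofFinite m
  rw [Nat.card_eq_fintype_card] at h
  have hrange : LinearMap.range A.mulVecLin = ⊤ := Submodule.eq_top_of_finrank_eq <|
    (Submodule.finrank_le _).antisymm (by rwa [Module.finrank_fintype_fun_eq_card])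
  exact LinearMap.range_eq_top.mp hrange

theorem surjective_apply_zero_prod_mulVec {R ι : Type*} [CommRing R] [Fintype ι] {n : ℕ}
    (A : Matrix ι (Fin (n + 1)) R) (hA : Function.Surjective (A.submatrix id Fin.succ).mulVec) :
    Function.Surjective fun v => (v 0, A.mulVec v) := by
  rintro ⟨t, w⟩
  obtain ⟨y, hy⟩ := hA (w - t • A.col 0)
  refine ⟨Fin.cons t y, Prod.ext rfl (funext fun i => ?_)⟩
  have hyi := congrFun hy i
  simp only [mulVec, dotProduct, Fin.sum_univ_succ, Fin.cons_zero, Fin.cons_succ, submatrix_apply,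
    id_eq, Pi.sub_apply, Pi.smul_apply, col_apply, smul_eq_mul] at hyi ⊢
  rw [hyi]
  ring

end Matrix

namespace MvPolynomial

theorem hasStrictFDerivAt_eval {σ : Type*} [Fintype σ] (p : MvPolynomial σ ℝ) (a : σ → ℝ) :
    HasStrictFDerivAt (fun x => eval x p)
      (∑ k, eval a (pderiv k p) • (ContinuousLinearMap.proj k : (σ → ℝ) →L[ℝ] ℝ)) a := by
  classical
  induction p using MvPolynomial.induction_on with
  | C r =>
    simp only [pderiv_C, map_zero, zero_smul, Finset.sum_const_zero, eval_C]
    exact hasStrictFDerivAt_const r a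
  | add p q hp hq =>
    simp only [map_add, add_smul, Finset.sum_add_distrib]
    exact hp.add hq
  | mul_X p i hp =>
    simp only [map_mul, eval_X]
    refine (hp.mul (ContinuousLinearMap.proj i).hasStrictFDerivAt).congr_fderiv ?_
    ext v
    simp [pderiv_X, Pi.single_apply, mul_add, Finset.sum_add_distrib, Finset.mul_sum, apply_ite,
      mul_comm, mul_left_comm]

variable {R : Type*} {n : ℕ}

theorem coeff_zero_finSuccEquiv_pderiv_succ [CommSemiring R] (k : Fin n)
    (q : MvPolynomial (Fin (n + 1)) R) :
    (finSuccEquiv R n (pderiv k.succ q)).coeff 0 = pderiv k ((finSuccEquiv R n q).coeff 0) := by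
  induction q using MvPolynomial.induction_on with
  | C r => simp [finSuccEquiv_apply]
  | add p q hp hq => simp only [map_add, Polynomial.coeff_add, hp, hq]
  | mul_X p i hp =>
    rw [pderiv_mul, map_add, map_mul, map_mul, Polynomial.coeff_add,
      Polynomial.mul_coeff_zero, Polynomial.mul_coeff_zero, hp, map_mul,
      Polynomial.mul_coeff_zero, pderiv_mul]
    refine Fin.cases ?_ (fun j => ?_) i
    · simp [pderiv_X_of_ne (Fin.succ_ne_zero k).symm, finSuccEquiv_X_zero]
    · rw [finSuccEquiv_X_succ]
      rcases eq_or_ne j k with rfl | hjk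
      · simp
      · simp [pderiv_X_of_ne hjk, pderiv_X_of_ne (fun h => hjk (Fin.succ_injective n h))]

theorem IsHomogeneous.homogeneousComponent_eq_coeff_zero_finSuccEquiv [CommRing R] [IsDomain R]
    [Infinite R] {d : ℕ} {q : MvPolynomial (Fin (n + 1)) R} {p : MvPolynomial (Fin n) R}
    (hq : q.IsHomogeneous d) (hpq : ∀ x, eval (Fin.cons 1 x) q = eval x p) :
    homogeneousComponent d p = (finSuccEquiv R n q).coeff 0 := by
  have hdeg (i : ℕ) (m : Fin n →₀ ℕ) : (m.cons i).degree = i + m.degree :=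
    Finsupp.sum_cons n m i
  -- `p` is `q` at `x₀ = 1`, i.e. the sum of the coefficients of `q` as a polynomial in `x₀`.
  have hp : p = ∑ i ∈ Finset.range ((finSuccEquiv R n q).natDegree + 1),
      (finSuccEquiv R n q).coeff i := by
    refine MvPolynomial.funext fun x => ?_
    rw [← hpq x, eval_eq_eval_mv_eval',
      Polynomial.eval_eq_sum_range' (Polynomial.natDegree_map_le.trans_lt (Nat.lt_succ_self _)),
      map_sum]
    exact Finset.sum_congr rfl fun i _ => by rw [Polynomial.coeff_map, one_pow, mul_one]
  ext m
  rw [coeff_homogeneousComponent, finSuccEquiv_coeff_coeff]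
  split_ifs with hm
  · rw [hp, coeff_sum, Finset.sum_eq_single 0]
    · rw [finSuccEquiv_coeff_coeff]
    · intro i _ hi
      rw [finSuccEquiv_coeff_coeff]
      exact hq.coeff_eq_zero (by rw [hdeg, hm]; omega)
    · simp
  · exact (hq.coeff_eq_zero (by simpa [hdeg] using hm)).symm

theorem IsHomogeneous.eval_cons_zero_pderiv_succ [CommRing R] [IsDomain R] [Infinite R] {d : ℕ}
    {q : MvPolynomial (Fin (n + 1)) R} {p : MvPolynomial (Fin n) R} (hq : q.IsHomogeneous d)
    (hpq : ∀ x, eval (Fin.cons 1 x) q = eval x p) (k : Fin n) (u : Fin n → R) :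
    eval (Fin.cons 0 u) (pderiv k.succ q) = eval u (pderiv k (homogeneousComponent d p)) := by
  rw [eval_eq_eval_mv_eval', hq.homogeneousComponent_eq_coeff_zero_finSuccEquiv hpq,
    ← coeff_zero_finSuccEquiv_pderiv_succ, ← Polynomial.coeff_map,
    Polynomial.coeff_zero_eq_eval_zero]

theorem frequently_apply_zero_lt_and_eval_eq {ι : Type*} [Finite ι]
    (P : ι → MvPolynomial (Fin (n + 1)) ℝ) (a : Fin (n + 1) → ℝ)
    (hP : Function.Surjective
      (Matrix.of fun i (k : Fin n) => eval a (pderiv k.succ (P i))).mulVec) :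
    ∃ᶠ x in 𝓝 a, a 0 < x 0 ∧ ∀ i, eval x (P i) = eval a (P i) := by
  have := Fintype.ofFinite ι
  let A : Matrix ι (Fin (n + 1)) ℝ := .of fun i k => eval a (pderiv k (P i))
  let D : (Fin (n + 1) → ℝ) →L[ℝ] ℝ × (ι → ℝ) := (ContinuousLinearMap.proj 0).prod
    (ContinuousLinearMap.pi fun i => ∑ k, A i k • ContinuousLinearMap.proj k)
  have hD : HasStrictFDerivAt (fun x => (x 0, fun i => eval x (P i))) D a :=
    (hasStrictFDerivAt_apply 0 a).prodMk
      (hasStrictFDerivAt_pi'.mpr fun i => hasStrictFDerivAt_eval (P i) a)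
  have hDsurj : Function.Surjective D := by
    convert A.surjective_apply_zero_prod_mulVec hP using 1
    ext v : 1
    simp only [D, ContinuousLinearMap.prod_apply, ContinuousLinearMap.proj_apply,
      ContinuousLinearMap.coe_pi', sum_apply, smul_apply,
      smul_eq_mul, Prod.mk.injEq, true_and]
    rfl
  exact (hD.frequently_fst_lt_and_snd_eq hDsurj).mono fun x hx => ⟨hx.1, congrFun hx.2⟩

theorem mem_closure_of_surjective_jacobian {ι κ : Type*} [Finite ι] [Finite κ]
    (Hh : ι → MvPolynomial (Fin (n + 1)) ℝ) (Hg : κ → MvPolynomial (Fin (n + 1)) ℝ)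
    {a : Fin (n + 1) → ℝ} (ha0 : a 0 = 0) (hh : ∀ i, eval a (Hh i) = 0)
    (hg : ∀ j, 0 ≤ eval a (Hg j))
    (hJ : Function.Surjective (Matrix.of fun (i : ι ⊕ {j // eval a (Hg j) = 0}) (k : Fin n) =>
      eval a (pderiv k.succ (Sum.elim Hh (fun j => Hg j.1) i))).mulVec) :
    a ∈ closure {x | (∀ i, eval x (Hh i) = 0) ∧ (∀ j, 0 ≤ eval x (Hg j)) ∧ 0 < x 0} := by
  have hinactive : ∀ᶠ x in 𝓝 a, ∀ j, eval a (Hg j) ≠ 0 → 0 < eval x (Hg j) :=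
    eventually_all.mpr fun j => eventually_imp_distrib_left.mpr fun hj =>
      continuousAt_const.eventually_lt (continuous_eval (Hg j)).continuousAt
        ((hg j).lt_of_ne' hj)
  rw [mem_closure_iff_frequently]
  refine ((frequently_apply_zero_lt_and_eval_eq _ a hJ).and_eventually hinactive).mono ?_
  rintro x ⟨⟨hx0, hxeq⟩, hxpos⟩
  refine ⟨fun i => (hxeq (.inl i)).trans (hh i), fun j => ?_, ha0 ▸ hx0⟩
  by_cases hj : eval a (Hg j) = 0
  · exact ((hxeq (.inr ⟨j, hj⟩)).trans hj).ge
  · exact (hxpos j hj).le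

end MvPolynomial

theorem jacobian_rank_deficient_of_not_closed_at_infinity_general
    (n m₁ m₂ : ℕ)
    (h : Fin m₁ → MvPolynomial (Fin n) ℝ) (g : Fin m₂ → MvPolynomial (Fin n) ℝ)
    (Hh : Fin m₁ → MvPolynomial (Fin (n + 1)) ℝ)
    (Hg : Fin m₂ → MvPolynomial (Fin (n + 1)) ℝ)
    (hHh : ∀ i, (Hh i).IsHomogeneous (h i).totalDegree)
    (hHh1 : ∀ i, ∀ x : Fin n → ℝ, eval (Fin.cons 1 x) (Hh i) = eval x (h i))
    (hHg : ∀ j, (Hg j).IsHomogeneous (g j).totalDegree)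
    (hHg1 : ∀ j, ∀ x : Fin n → ℝ, eval (Fin.cons 1 x) (Hg j) = eval x (g j))
    (Stilde S0 : Set (Fin (n + 1) → ℝ))
    (hStilde : Stilde = {xt | (∀ i, eval xt (Hh i) = 0) ∧
      (∀ j, 0 ≤ eval xt (Hg j)) ∧ 0 ≤ xt 0})
    (hS0 : S0 = {xt | (∀ i, eval xt (Hh i) = 0) ∧
      (∀ j, 0 ≤ eval xt (Hg j)) ∧ 0 < xt 0})
    (ut : Fin (n + 1) → ℝ) (hu0 : ut 0 = 0)
    (huS : ut ∈ Stilde) (hunotcl : ut ∉ closure S0)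
    (u : Fin n → ℝ) (hu : u = fun i : Fin n => ut i.succ) :
    Matrix.rank (Matrix.of
        (Sum.elim
          (fun (i : Fin m₁) (k : Fin n) =>
            eval u (pderiv k (homogeneousComponent (h i).totalDegree (h i))))
          (fun (j : {j : Fin m₂ // eval ut (Hg j) = 0}) (k : Fin n) =>
            eval u (pderiv k (homogeneousComponent (g j.1).totalDegree (g j.1)))))) <
      m₁ + Nat.card {j : Fin m₂ // eval ut (Hg j) = 0} := by
  by_contra! hfull
  obtain ⟨hHh0, hHg0, -⟩ := hStilde ▸ huS
  have hut : ut = Fin.cons 0 u := by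
    ext k
    cases k using Fin.cases <;> simp [hu0, hu]
  refine hunotcl (hS0 ▸ mem_closure_of_surjective_jacobian Hh Hg hu0 hHh0 hHg0 ?_)
  have hcard : Nat.card (Fin m₁ ⊕ {j // eval ut (Hg j) = 0}) =
      m₁ + Nat.card {j // eval ut (Hg j) = 0} := by
    rw [Nat.card_sum, Nat.card_fin]
  convert Matrix.mulVec_surjective_of_card_height_le_rank _ (hcard.trans_le hfull) using 3
  ext (i | j) k
  · exact hut ▸ (hHh i).eval_cons_zero_pderiv_succ (hHh1 i) k u
  · exact hut ▸ (hHg j).eval_cons_zero_pderiv_succ (hHg1 j) k u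

/-- under the hypotheses of the separation lemma, if
`m = m₁ + |J(u)| < n + 1`, then the Jacobian matrix `A(u)` whose rows are the
gradients of the top-degree parts `ĥᵢ` and `ĝⱼ` (`j ∈ J(u)`) at `u` has rank
strictly less than `m₁ + |J(u)|`. -/
theorem jacobian_rank_deficient_of_not_closed_at_infinity
    (n m₁ m₂ : ℕ)
    (h : Fin m₁ → MvPolynomial (Fin n) ℝ) (g : Fin m₂ → MvPolynomial (Fin n) ℝ)
    (Hh : Fin m₁ → MvPolynomial (Fin (n + 1)) ℝ)
    (Hg : Fin m₂ → MvPolynomial (Fin (n + 1)) ℝ)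
    (hHh : ∀ i, (Hh i).IsHomogeneous (h i).totalDegree)
    (hHh1 : ∀ i, ∀ x : Fin n → ℝ, eval (Fin.cons 1 x) (Hh i) = eval x (h i))
    (hHg : ∀ j, (Hg j).IsHomogeneous (g j).totalDegree)
    (hHg1 : ∀ j, ∀ x : Fin n → ℝ, eval (Fin.cons 1 x) (Hg j) = eval x (g j))
    (Stilde S0 : Set (Fin (n + 1) → ℝ))
    (hStilde : Stilde = {xt | (∀ i, eval xt (Hh i) = 0) ∧
      (∀ j, 0 ≤ eval xt (Hg j)) ∧ 0 ≤ xt 0})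
    (hS0 : S0 = {xt | (∀ i, eval xt (Hh i) = 0) ∧
      (∀ j, 0 ≤ eval xt (Hg j)) ∧ 0 < xt 0})
    (ut : Fin (n + 1) → ℝ) (hu0 : ut 0 = 0) (hune : ut ≠ 0)
    (huS : ut ∈ Stilde) (hunotcl : ut ∉ closure S0)
    (u : Fin n → ℝ) (hu : u = fun i : Fin n => ut i.succ)
    (hcard : m₁ + Nat.card {j : Fin m₂ // eval ut (Hg j) = 0} < n + 1) :
    Matrix.rank (Matrix.of
        (Sum.elim
          (fun (i : Fin m₁) (k : Fin n) =>
            eval u (pderiv k (homogeneousComponent (h i).totalDegree (h i))))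
          (fun (j : {j : Fin m₂ // eval ut (Hg j) = 0}) (k : Fin n) =>
            eval u (pderiv k (homogeneousComponent (g j.1).totalDegree (g j.1)))))) <
      m₁ + Nat.card {j : Fin m₂ // eval ut (Hg j) = 0} :=
  jacobian_rank_deficient_of_not_closed_at_infinity_general n m₁ m₂ h g Hh Hg hHh hHh1 hHg hHg1
    Stilde S0 hStilde hS0 ut hu0 huS hunotcl u hu
end

section
/- Let h : ℝⁿ → ℝ^{m₁}, g : ℝⁿ → ℝ^{m₂} be polynomial maps, f ∈ ℝ[x], and suppose (i) m₁ ≤ n and (ii) for any feasible u (i.e., h(u)=0, g(u)≥0) at most n − m₁ of g₁(u),…,g_{m₂}(u) vanish. Define W as the complex variety cut out by h₁,…,h_{m₁} and the polynomials φ (products of defining equations of the determinantal varieties G_J = {x : rank[∇f, ∇h, ∇g_J] ≤ m₁+|J|} with ∏_{j∉J} gⱼ, over all J ⊆ [m₂] with |J| ≤ min(m₁+m₂, n−1) − m₁). Let Θ be the union over J ⊆ [m₂], |J| ≤ n−m₁, of the singular loci {x ∈ V(h,g_J) : rank[∇h ∇g_J] < m₁+|J|}, and let K_x be the projection to x-space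 of the KKT variety. Then W = Θ ∪ K_x. -/
/-!
Fix `x` and compare the augmented Jacobian `[∇f ∇h ∇g_J]` at `x` with `[∇h ∇g_J]`. If the
augmented one has rank at most `m₁ + |J|` (the number of columns of the other), then either
`[∇h ∇g_J]` is rank deficient (so `x ∈ Θ` once `g_J(x) = 0`) or `∇f(x)` lies in its column span,
which gives KKT multipliers supported on `J`. For `x ∈ W` take `J` to be the active set when it is
small; otherwise a subset of `n - m₁` active indices, for which the rank bound `n` is automatic.
Conversely, if `[∇h ∇g_J]` is rank deficient, adding `∇f` and the columns of `J' ⊇ J` raises its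
rank by at most `1 + |J' \ J|`, so the augmented Jacobian of `J'` has rank `≤ m₁ + |J'|`. At a
KKT point, `∇f(x)` is in the span of `[∇h ∇g_{J'}]` as soon as no `gⱼ` with `j ∉ J'` vanishes.
In all remaining cases the factor `∏_{j ∉ J'} gⱼ(x)` of `φ` vanishes.
-/

open MvPolynomial Submodule Module Set

theorem Matrix.rank_of_cols {R m ι : Type*} [CommSemiring R] [Fintype m] [Fintype ι]
    (v : ι → m → R) : (Matrix.of fun k c => v c k).rank = finrank R (span R (range v)) :=
  Matrix.rank_eq_finrank_span_cols _

section LinearAlgebra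

variable {K V : Type*} [Field K] [AddCommGroup V] [Module K V]

theorem mem_span_of_finrank_span_insert_le [FiniteDimensional K V] {a : V} {s : Set V}
    (h : finrank K (span K (insert a s)) ≤ finrank K (span K s)) : a ∈ span K s :=
  eq_of_le_of_finrank_le (span_mono (subset_insert a s)) h ▸ subset_span (mem_insert a s)

theorem finrank_span_union_finset_le [FiniteDimensional K V] (s : Set V) (t : Finset V) :
    finrank K (span K (s ∪ t)) ≤ finrank K (span K s) + t.card := by
  rw [span_union]
  exact (finrank_add_le_finrank_add_finrank _ _).trans
    (Nat.add_le_add_left (finrank_span_finset_le_card t) _)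

theorem mem_span_range_sumElim_iff {ι κ : Type*} [Fintype ι] [Fintype κ] (F : ι → V)
    (G : κ → V) (J : Finset κ) (a : V) :
    a ∈ span K (range (Sum.elim F fun j : J => G j)) ↔
      ∃ (lam : ι → K) (mu : κ → K), (∀ j ∉ J, mu j = 0) ∧
        a = ∑ i, lam i • F i + ∑ j, mu j • G j := by
  classical
  have sum_coe_J (mu : κ → K) (hmu : ∀ j ∉ J, mu j = 0) :
      ∑ j : J, mu j • G j = ∑ j, mu j • G j := by
    rw [Finset.sum_coe_sort J fun j => mu j • G j]
    exact Finset.sum_subset J.subset_univ fun j _ hj => by rw [hmu j hj, zero_smul]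
  simp only [mem_span_range_iff_exists_fun, Fintype.sum_sum_type, Sum.elim_inl, Sum.elim_inr]
  constructor
  · rintro ⟨c, rfl⟩
    let mu : κ → K := fun j => if hj : j ∈ J then c (Sum.inr ⟨j, hj⟩) else 0
    have hmu : ∀ j ∉ J, mu j = 0 := fun j hj => dif_neg hj
    refine ⟨c ∘ Sum.inl, mu, hmu, ?_⟩
    rw [← sum_coe_J mu hmu]
    simp [mu]
  · rintro ⟨lam, mu, hmu, rfl⟩
    refine ⟨Sum.elim lam fun j => mu j, ?_⟩
    simp only [Sum.elim_inl, Sum.elim_inr, sum_coe_J mu hmu]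

end LinearAlgebra

section KKT

variable {n m₁ m₂ : ℕ} (x : Fin n → ℂ) (f : MvPolynomial (Fin n) ℝ)
  (h : Fin m₁ → MvPolynomial (Fin n) ℝ) (g : Fin m₂ → MvPolynomial (Fin n) ℝ)

noncomputable def gradAt (p : MvPolynomial (Fin n) ℝ) : Fin n → ℂ :=
  fun k => aeval x (pderiv k p)

noncomputable def constraintGrads (J : Finset (Fin m₂)) : Fin m₁ ⊕ J → Fin n → ℂ :=
  Sum.elim (fun i => gradAt x (h i)) fun j => gradAt x (g j)

theorem rank_constraintJacobian (J : Finset (Fin m₂)) :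
    Matrix.rank (Matrix.of fun (k : Fin n) (c : Fin m₁ ⊕ {j // j ∈ J}) =>
        Sum.elim (fun i => aeval x (pderiv k (h i))) (fun j => aeval x (pderiv k (g j.1))) c) =
      finrank ℂ (span ℂ (range (constraintGrads x h g J))) := by
  rw [← Matrix.rank_of_cols]
  congr
  ext k (i | j) <;> rfl

theorem rank_augmentedJacobian (J : Finset (Fin m₂)) :
    Matrix.rank (Matrix.of fun (k : Fin n) (c : Unit ⊕ Fin m₁ ⊕ {j // j ∈ J}) =>
        Sum.elim (fun _ => aeval x (pderiv k f))
          (Sum.elim (fun i => aeval x (pderiv k (h i)))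
            (fun j => aeval x (pderiv k (g j.1)))) c) =
      finrank ℂ (span ℂ (insert (gradAt x f) (range (constraintGrads x h g J)))) := by
  rw [← singleton_union, ← range_const (ι := Unit), ← Sum.elim_range, ← Matrix.rank_of_cols]
  congr
  ext k (_ | i | j) <;> rfl

theorem finrank_span_constraintGrads_le (J : Finset (Fin m₂)) :
    finrank ℂ (span ℂ (range (constraintGrads x h g J))) ≤ m₁ + J.card := by
  simpa [Set.finrank] using finrank_range_le_card (R := ℂ) (constraintGrads x h g J)

theorem gradAt_mem_span_constraintGrads_iff (J : Finset (Fin m₂)) :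
    gradAt x f ∈ span ℂ (range (constraintGrads x h g J)) ↔
      ∃ (lam : Fin m₁ → ℂ) (mu : Fin m₂ → ℂ), (∀ j ∉ J, mu j = 0) ∧
        ∀ k : Fin n, aeval x (pderiv k f) =
          (∑ i, lam i * aeval x (pderiv k (h i))) + ∑ j, mu j * aeval x (pderiv k (g j)) := by
  rw [constraintGrads, mem_span_range_sumElim_iff (G := fun j => gradAt x (g j))]
  simp only [funext_iff, gradAt, Pi.add_apply, Finset.sum_apply, Pi.smul_apply, smul_eq_mul,
    eq_comm (a := aeval x _)]

theorem rank_deficient_or_kkt {J : Finset (Fin m₂)} (hgJ : ∀ j ∈ J, aeval x (g j) = 0)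
    (hR : finrank ℂ (span ℂ (insert (gradAt x f) (range (constraintGrads x h g J)))) ≤
      m₁ + J.card) :
    finrank ℂ (span ℂ (range (constraintGrads x h g J))) < m₁ + J.card ∨
      ∃ (lam : Fin m₁ → ℂ) (mu : Fin m₂ → ℂ),
        (∀ k : Fin n, aeval x (pderiv k f) =
          (∑ i, lam i * aeval x (pderiv k (h i))) + ∑ j, mu j * aeval x (pderiv k (g j))) ∧
        ∀ j, mu j * aeval x (g j) = 0 := by
  refine or_iff_not_imp_left.mpr fun hr => ?_
  obtain ⟨lam, mu, hmu, hstat⟩ := (gradAt_mem_span_constraintGrads_iff x f h g J).mp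
    (mem_span_of_finrank_span_insert_le (hR.trans (not_lt.mp hr)))
  refine ⟨lam, mu, hstat, fun j => ?_⟩
  by_cases hj : j ∈ J
  · rw [hgJ j hj, mul_zero]
  · rw [hmu j hj, zero_mul]

theorem finrank_span_insert_le_of_rank_deficient {J J' : Finset (Fin m₂)} (hJJ' : J ⊆ J')
    (hr : finrank ℂ (span ℂ (range (constraintGrads x h g J))) < m₁ + J.card) :
    finrank ℂ (span ℂ (insert (gradAt x f) (range (constraintGrads x h g J')))) ≤
      m₁ + J'.card := by
  set extra : Finset (Fin n → ℂ) := insert (gradAt x f) ((J' \ J).image fun j => gradAt x (g j))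
  have hsub : insert (gradAt x f) (range (constraintGrads x h g J')) ⊆
      range (constraintGrads x h g J) ∪ extra := by
    rintro _ (rfl | ⟨i | ⟨j, hj⟩, rfl⟩)
    · exact Or.inr (Finset.mem_insert_self _ _)
    · exact Or.inl ⟨Sum.inl i, rfl⟩
    · by_cases hjJ : j ∈ J
      · exact Or.inl ⟨Sum.inr ⟨j, hjJ⟩, rfl⟩
      · exact Or.inr (Finset.mem_insert_of_mem
          (Finset.mem_image_of_mem _ (Finset.mem_sdiff.mpr ⟨hj, hjJ⟩)))
  have hextra : extra.card ≤ J'.card - J.card + 1 := by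
    rw [← Finset.card_sdiff_of_subset hJJ']
    exact (Finset.card_insert_le _ _).trans (Nat.succ_le_succ Finset.card_image_le)
  have hJ := Finset.card_le_card hJJ'
  calc _ ≤ finrank ℂ (span ℂ (range (constraintGrads x h g J) ∪ extra)) :=
        finrank_mono (span_mono hsub)
    _ ≤ finrank ℂ (span ℂ (range (constraintGrads x h g J))) + extra.card :=
        finrank_span_union_finset_le _ _
    _ ≤ m₁ + J'.card := by omega

theorem finrank_span_insert_le_of_kkt {J : Finset (Fin m₂)}
    (hgJ : ∀ j ∉ J, aeval x (g j) ≠ 0) {lam : Fin m₁ → ℂ} {mu : Fin m₂ → ℂ}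
    (hstat : ∀ k : Fin n, aeval x (pderiv k f) =
      (∑ i, lam i * aeval x (pderiv k (h i))) + ∑ j, mu j * aeval x (pderiv k (g j)))
    (hcomp : ∀ j, mu j * aeval x (g j) = 0) :
    finrank ℂ (span ℂ (insert (gradAt x f) (range (constraintGrads x h g J)))) ≤
      m₁ + J.card := by
  have hmem := (gradAt_mem_span_constraintGrads_iff x f h g J).mpr
    ⟨lam, mu, fun j hj => (mul_eq_zero.mp (hcomp j)).resolve_right (hgJ j hj), hstat⟩
  rw [span_insert_eq_span hmem]
  exact finrank_span_constraintGrads_le x h g J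

theorem exists_active_finrank_span_insert_le (hm : m₁ ≤ n)
    (hW : ∀ J : Finset (Fin m₂), J.card ≤ min (m₁ + m₂) (n - 1) - m₁ →
      finrank ℂ (span ℂ (insert (gradAt x f) (range (constraintGrads x h g J)))) ≤
        m₁ + J.card ∨ ∃ j ∉ J, aeval x (g j) = 0) :
    ∃ J : Finset (Fin m₂), (∀ j ∈ J, aeval x (g j) = 0) ∧ J.card ≤ n - m₁ ∧
      finrank ℂ (span ℂ (insert (gradAt x f) (range (constraintGrads x h g J)))) ≤
        m₁ + J.card := by
  set S := Finset.univ.filter fun j => aeval x (g j) = 0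
  have hgS : ∀ j ∈ S, aeval x (g j) = 0 := fun j hj => (Finset.mem_filter.mp hj).2
  by_cases hS : S.card ≤ min (m₁ + m₂) (n - 1) - m₁
  · refine ⟨S, hgS, by omega, (hW S hS).resolve_right ?_⟩
    rintro ⟨j, hj, hgj⟩
    exact hj (Finset.mem_filter.mpr ⟨Finset.mem_univ j, hgj⟩)
  · have hSm : S.card ≤ m₂ := (Finset.card_le_univ S).trans_eq (Fintype.card_fin m₂)
    obtain ⟨J, hJS, hJ⟩ := Finset.exists_subset_card_eq (show n - m₁ ≤ S.card by omega)
    refine ⟨J, fun j hj => hgS j (hJS hj), hJ.le, ?_⟩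
    calc _ ≤ finrank ℂ (Fin n → ℂ) := Submodule.finrank_le _
      _ = m₁ + J.card := by rw [finrank_fin_fun, hJ]; omega

end KKT

theorem W_eq_Theta_union_KKT_general
    (n m₁ m₂ : ℕ)
    (f : MvPolynomial (Fin n) ℝ)
    (h : Fin m₁ → MvPolynomial (Fin n) ℝ) (g : Fin m₂ → MvPolynomial (Fin n) ℝ)
    (hm : m₁ ≤ n)
    (len : Finset (Fin m₂) → ℕ)
    (η : (J : Finset (Fin m₂)) → Fin (len J) → MvPolynomial (Fin n) ℝ)
    -- the `η J i` are defining polynomials for the determinantal variety `G_J`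
    (hη : ∀ J : Finset (Fin m₂), J.card ≤ min (m₁ + m₂) (n - 1) - m₁ →
      {x : Fin n → ℂ | ∀ i, aeval x (η J i) = 0} =
        {x : Fin n → ℂ |
          Matrix.rank (Matrix.of fun (k : Fin n) (c : Unit ⊕ Fin m₁ ⊕ {j // j ∈ J}) =>
            Sum.elim (fun _ => aeval x (pderiv k f))
              (Sum.elim (fun i => aeval x (pderiv k (h i)))
                (fun j => aeval x (pderiv k (g j.1)))) c) ≤ m₁ + J.card}) :
    -- W
    {x : Fin n → ℂ | (∀ i, aeval x (h i) = 0) ∧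
        ∀ J : Finset (Fin m₂), J.card ≤ min (m₁ + m₂) (n - 1) - m₁ →
          ∀ i, aeval x (η J i) * ∏ j ∈ Jᶜ, aeval x (g j) = 0} =
      -- Θ
      {x : Fin n → ℂ | ∃ J : Finset (Fin m₂), J.card ≤ n - m₁ ∧
          (∀ i, aeval x (h i) = 0) ∧ (∀ j ∈ J, aeval x (g j) = 0) ∧
          Matrix.rank (Matrix.of fun (k : Fin n) (c : Fin m₁ ⊕ {j // j ∈ J}) =>
            Sum.elim (fun i => aeval x (pderiv k (h i)))
              (fun j => aeval x (pderiv k (g j.1))) c) < m₁ + J.card} ∪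
      -- K_x
      {x : Fin n → ℂ | ∃ (lam : Fin m₁ → ℂ) (mu : Fin m₂ → ℂ),
          (∀ k : Fin n, aeval x (pderiv k f) =
            (∑ i, lam i * aeval x (pderiv k (h i))) +
              ∑ j, mu j * aeval x (pderiv k (g j))) ∧
          (∀ i, aeval x (h i) = 0) ∧ ∀ j, mu j * aeval x (g j) = 0} := by
  ext x
  have hW (J : Finset (Fin m₂)) (hJ : J.card ≤ min (m₁ + m₂) (n - 1) - m₁) :
      (∀ i, aeval x (η J i) * ∏ j ∈ Jᶜ, aeval x (g j) = 0) ↔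
        finrank ℂ (span ℂ (insert (gradAt x f) (range (constraintGrads x h g J)))) ≤
          m₁ + J.card ∨ ∃ j ∉ J, aeval x (g j) = 0 := by
    have hG := Set.ext_iff.mp (hη J hJ) x
    simp only [mem_ofPred_eq, rank_augmentedJacobian] at hG
    simp only [mul_eq_zero, forall_or_right, Finset.prod_eq_zero_iff, Finset.mem_compl, hG]
  simp only [mem_ofPred_eq, mem_union, rank_constraintJacobian]
  constructor
  · rintro ⟨hh, hWx⟩
    obtain ⟨J, hgJ, hJcard, hR⟩ :=
      exists_active_finrank_span_insert_le x f h g hm fun J hJ => (hW J hJ).mp (hWx J hJ)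
    rcases rank_deficient_or_kkt x f h g hgJ hR with hr | ⟨lam, mu, hstat, hcomp⟩
    · exact Or.inl ⟨J, hJcard, hh, hgJ, hr⟩
    · exact Or.inr ⟨lam, mu, hstat, hh, hcomp⟩
  · rintro (⟨J, -, hh, hgJ, hr⟩ | ⟨lam, mu, hstat, hh, hcomp⟩) <;>
      refine ⟨hh, fun J' hJ' => (hW J' hJ').mpr ?_⟩
    · by_cases hJJ' : J ⊆ J'
      · exact Or.inl (finrank_span_insert_le_of_rank_deficient x f h g hJJ' hr)
      · obtain ⟨j, hj, hj'⟩ := Finset.not_subset.mp hJJ'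
        exact Or.inr ⟨j, hj', hgJ j hj⟩
    · by_cases hgJ' : ∃ j ∉ J', aeval x (g j) = 0
      · exact Or.inr hgJ'
      · push Not at hgJ'
        exact Or.inl (finrank_span_insert_le_of_kkt x f h g hgJ' hstat hcomp)

/-- revised Lemma 3.1: under (i) `m₁ ≤ n` and (ii) at most
`n − m₁` of the `gⱼ` vanish at any feasible point, the variety `W` cut out by
the `hᵢ` and the polynomials `φ` equals `Θ ∪ K_x`, where `Θ` is the union of
singular loci and `K_x` the projection of the KKT variety. -/
theorem W_eq_Theta_union_KKT
    (n m₁ m₂ : ℕ)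
    (f : MvPolynomial (Fin n) ℝ)
    (h : Fin m₁ → MvPolynomial (Fin n) ℝ) (g : Fin m₂ → MvPolynomial (Fin n) ℝ)
    (hm : m₁ ≤ n)
    (hfeas : ∀ u : Fin n → ℝ,
      ((∀ i, eval u (h i) = 0) ∧ ∀ j, 0 ≤ eval u (g j)) →
        Nat.card {j : Fin m₂ // eval u (g j) = 0} ≤ n - m₁)
    (len : Finset (Fin m₂) → ℕ)
    (η : (J : Finset (Fin m₂)) → Fin (len J) → MvPolynomial (Fin n) ℝ)
    -- the `η J i` are defining polynomials for the determinantal variety `G_J`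
    (hη : ∀ J : Finset (Fin m₂), J.card ≤ min (m₁ + m₂) (n - 1) - m₁ →
      {x : Fin n → ℂ | ∀ i, aeval x (η J i) = 0} =
        {x : Fin n → ℂ |
          Matrix.rank (Matrix.of fun (k : Fin n) (c : Unit ⊕ Fin m₁ ⊕ {j // j ∈ J}) =>
            Sum.elim (fun _ => aeval x (pderiv k f))
              (Sum.elim (fun i => aeval x (pderiv k (h i)))
                (fun j => aeval x (pderiv k (g j.1)))) c) ≤ m₁ + J.card}) :
    -- W
    {x : Fin n → ℂ | (∀ i, aeval x (h i) = 0) ∧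
        ∀ J : Finset (Fin m₂), J.card ≤ min (m₁ + m₂) (n - 1) - m₁ →
          ∀ i, aeval x (η J i) * ∏ j ∈ Jᶜ, aeval x (g j) = 0} =
      -- Θ
      {x : Fin n → ℂ | ∃ J : Finset (Fin m₂), J.card ≤ n - m₁ ∧
          (∀ i, aeval x (h i) = 0) ∧ (∀ j ∈ J, aeval x (g j) = 0) ∧
          Matrix.rank (Matrix.of fun (k : Fin n) (c : Fin m₁ ⊕ {j // j ∈ J}) =>
            Sum.elim (fun i => aeval x (pderiv k (h i)))
              (fun j => aeval x (pderiv k (g j.1))) c) < m₁ + J.card} ∪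
      -- K_x
      {x : Fin n → ℂ | ∃ (lam : Fin m₁ → ℂ) (mu : Fin m₂ → ℂ),
          (∀ k : Fin n, aeval x (pderiv k f) =
            (∑ i, lam i * aeval x (pderiv k (h i))) +
              ∑ j, mu j * aeval x (pderiv k (g j))) ∧
          (∀ i, aeval x (h i) = 0) ∧ ∀ j, mu j * aeval x (g j) = 0} :=
  W_eq_Theta_union_KKT_general n m₁ m₂ f h g hm len η hη
end

section
/- Under conditions (i) m₁ ≤ n and (ii) at most n − m₁ of the gⱼ vanish at any feasible point, if the minimum f_min of min{f(x) : h(x)=0, g(x)≥0} is attained at a point x*, then x* belongs to W = Θ ∪ K_x; consequently the infimum f* of f over the Jacobian-augmented feasible set (adding the equations defining W) equals f_min. -/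
/-!
Near the minimizer `x*` the inactive constraints `g j > 0` can be ignored, so `x*` minimizes `f`
locally on the common zero set of the `h i` and of the active `g j`. The Lagrange multiplier rule
then gives Fritz John multipliers `(λ₀, λ, μ) ≠ 0`, with `μ` supported on the active set. If
`λ₀ = 0`, then `(λ, μ)` is a kernel vector of the Jacobian of the active constraints, whose number
is at most `n - m₁` by (ii), so `x* ∈ Θ`; otherwise dividing by `λ₀` gives KKT multipliers. For
every `J` containing the active set, `(λ₀, λ, μ|_J)` is a kernel vector of the augmented Jacobian,
so all `η J` vanish at `x*`; for the other `J` some `g j` with `j ∉ J` vanishes at `x*`. Hence `x*`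
lies in the augmented feasible set, all of whose points are feasible, and `f* = f_min`.
-/

open MvPolynomial Filter Topology

theorem MvPolynomial.hasStrictFDerivAt_eval_s12 {𝕜 σ : Type*} [NontriviallyNormedField 𝕜]
    [Fintype σ] [DecidableEq σ] (p : MvPolynomial σ 𝕜) (x : σ → 𝕜) :
    HasStrictFDerivAt (fun y => eval y p)
      (∑ k, eval x (pderiv k p) • (ContinuousLinearMap.proj k : (σ → 𝕜) →L[𝕜] 𝕜)) x := by
  induction p using MvPolynomial.induction_on with
  | C a =>
    simp only [eval_C]
    exact (hasStrictFDerivAt_const a x).congr_fderiv (by ext; simp)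
  | add p q hp hq =>
    simp only [map_add]
    exact (hp.fun_add hq).congr_fderiv (by ext; simp [add_mul, Finset.sum_add_distrib])
  | mul_X p i hp =>
    simp only [eval_mul, eval_X]
    refine (hp.fun_mul (hasStrictFDerivAt_apply i x)).congr_fderiv ?_
    ext v
    simp [Pi.single_apply, apply_ite, mul_add, Finset.sum_add_distrib, Finset.mul_sum, mul_comm,
      mul_left_comm]

theorem IsLocalMinOn.on_active_eq_zero {E ι κ : Type*} [TopologicalSpace E] [Finite κ]
    {F : E → ℝ} {H : ι → E → ℝ} {G : κ → E → ℝ} {x₀ : E}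
    (hmin : IsLocalMinOn F {x | (∀ i, H i x = 0) ∧ ∀ j, 0 ≤ G j x} x₀)
    (hG₀ : ∀ j, 0 ≤ G j x₀) (hG : ∀ j, ContinuousAt (G j) x₀) :
    IsLocalMinOn F {x | (∀ i, H i x = 0) ∧ ∀ j, G j x₀ = 0 → G j x = 0} x₀ := by
  have hpos : ∀ᶠ y in 𝓝 x₀, ∀ j, G j x₀ ≠ 0 → 0 < G j y :=
    eventually_all.2 fun j => by
      by_cases hj : G j x₀ = 0
      · exact .of_forall fun _ h => absurd hj h
      · exact ((hG j).eventually (lt_mem_nhds ((hG₀ j).lt_of_ne' hj))).mono fun _ hy _ => hy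
  rw [IsLocalMinOn, IsMinFilter, eventually_nhdsWithin_iff] at hmin ⊢
  filter_upwards [hmin, hpos] with y hy hypos ⟨hH, hact⟩
  refine hy ⟨hH, fun j => ?_⟩
  by_cases hj : G j x₀ = 0
  · exact (hact j hj).ge
  · exact (hypos j hj).le

theorem IsLocalMinOn.exists_fritzJohn_multipliers {E ι κ : Type*} [NormedAddCommGroup E]
    [NormedSpace ℝ E] [CompleteSpace E] [Fintype ι] [Fintype κ]
    {F : E → ℝ} {H : ι → E → ℝ} {G : κ → E → ℝ} {x₀ : E}
    {F' : StrongDual ℝ E} {H' : ι → StrongDual ℝ E} {G' : κ → StrongDual ℝ E}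
    (hmin : IsLocalMinOn F {x | (∀ i, H i x = 0) ∧ ∀ j, 0 ≤ G j x} x₀)
    (hx₀ : (∀ i, H i x₀ = 0) ∧ ∀ j, 0 ≤ G j x₀)
    (hF : HasStrictFDerivAt F F' x₀) (hH : ∀ i, HasStrictFDerivAt (H i) (H' i) x₀)
    (hG : ∀ j, HasStrictFDerivAt (G j) (G' j) x₀) :
    ∃ (Λ₀ : ℝ) (Λ : ι → ℝ) (M : κ → ℝ), (Λ₀, Λ, M) ≠ 0 ∧ (∀ j, G j x₀ ≠ 0 → M j = 0) ∧
      Λ₀ • F' + ∑ i, Λ i • H' i + ∑ j, M j • G' j = 0 := by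
  classical
  set A : Finset κ := {j | G j x₀ = 0}
  have hA : ∀ j, j ∈ A ↔ G j x₀ = 0 := by simp [A]
  have hextr : IsLocalExtrOn F
      {x | ∀ c : ι ⊕ A, Sum.elim H (fun j : A => G j) c x = Sum.elim H (fun j : A => G j) c x₀}
      x₀ := by
    refine .inl ((hmin.on_active_eq_zero hx₀.2 fun j => (hG j).continuousAt).on_subset ?_)
    intro x hx
    refine ⟨fun i => (hx (.inl i)).trans (hx₀.1 i), fun j hj => ?_⟩
    exact (hx (.inr ⟨j, (hA j).2 hj⟩)).trans hj
  obtain ⟨Λ, Λ₀, hne, hsum⟩ := hextr.exists_multipliers_of_hasStrictFDerivAt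
    (f := Sum.elim H fun j : A => G j) (f' := Sum.elim H' fun j : A => G' j)
    (fun c => c.rec hH fun j => hG j) hF
  set M : κ → ℝ := fun j => if hj : j ∈ A then Λ (.inr ⟨j, hj⟩) else 0
  have hM : ∑ j, M j • G' j = ∑ j : A, Λ (.inr j) • G' j := by
    simp only [M, dite_smul, zero_smul]
    exact (Finset.sum_attach_eq_sum_dite A fun j => Λ (.inr j) • G' j).symm
  refine ⟨Λ₀, Λ ∘ .inl, M, ?_, fun j hj => by simp [M, (hA j).not.2 hj], ?_⟩
  · contrapose! hne
    simp only [Prod.mk_eq_zero] at hne ⊢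
    refine ⟨funext fun c => c.rec (fun i => congrFun hne.2.1 i) fun j => ?_, hne.1⟩
    simpa [M, j.2] using congrFun hne.2.2 j
  · rw [hM, ← hsum, Fintype.sum_sum_type]
    simp only [Sum.elim_inl, Sum.elim_inr, Function.comp_apply]
    abel

theorem MvPolynomial.aeval_ofReal {σ : Type*} (x : σ → ℝ) (p : MvPolynomial σ ℝ) :
    aeval (fun i => (x i : ℂ)) p = eval x p :=
  aeval_algebraMap_apply (B := ℂ) x p

theorem Matrix.rank_lt_card_width_of_mulVec_eq_zero {K m k : Type*} [Field K] [Fintype k]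
    {M : Matrix m k K} {v : k → K} (hv : v ≠ 0) (hMv : M.mulVec v = 0) :
    M.rank < Fintype.card k := by
  classical
  have hker : 0 < Module.finrank K (LinearMap.ker M.mulVecLin) :=
    Module.finrank_pos_iff_exists_ne_zero.mpr ⟨⟨v, hMv⟩, fun h0 => hv (congrArg Subtype.val h0)⟩
  have := LinearMap.finrank_range_add_finrank_ker M.mulVecLin
  rw [Module.finrank_fintype_fun_eq_card] at this
  rw [Matrix.rank]
  omega

section PolynomialProgram

variable {n m₁ m₂ : ℕ} {f : MvPolynomial (Fin n) ℝ} {h : Fin m₁ → MvPolynomial (Fin n) ℝ}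
  {g : Fin m₂ → MvPolynomial (Fin n) ℝ} {x : Fin n → ℝ} {J : Finset (Fin m₂)}

open scoped Classical in
noncomputable def activeSet (g : Fin m₂ → MvPolynomial (Fin n) ℝ) (x : Fin n → ℝ) :
    Finset (Fin m₂) :=
  {j | eval x (g j) = 0}

@[simp]
theorem mem_activeSet {j : Fin m₂} : j ∈ activeSet g x ↔ eval x (g j) = 0 := by
  simp [activeSet]

theorem card_activeSet : (activeSet g x).card = Nat.card {j // eval x (g j) = 0} := by
  classical
  rw [Nat.card_eq_fintype_card, Fintype.card_subtype]
  simp [activeSet]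

noncomputable def constraintJacobian (h : Fin m₁ → MvPolynomial (Fin n) ℝ)
    (g : Fin m₂ → MvPolynomial (Fin n) ℝ) (J : Finset (Fin m₂)) (z : Fin n → ℂ) :
    Matrix (Fin n) (Fin m₁ ⊕ {j // j ∈ J}) ℂ :=
  Matrix.of fun k c =>
    Sum.elim (fun i => aeval z (pderiv k (h i))) (fun j => aeval z (pderiv k (g j.1))) c

noncomputable def augmentedJacobian (f : MvPolynomial (Fin n) ℝ)
    (h : Fin m₁ → MvPolynomial (Fin n) ℝ) (g : Fin m₂ → MvPolynomial (Fin n) ℝ)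
    (J : Finset (Fin m₂)) (z : Fin n → ℂ) : Matrix (Fin n) (Unit ⊕ Fin m₁ ⊕ {j // j ∈ J}) ℂ :=
  Matrix.of fun k c =>
    Sum.elim (fun _ => aeval z (pderiv k f))
      (Sum.elim (fun i => aeval z (pderiv k (h i))) (fun j => aeval z (pderiv k (g j.1)))) c

-- The sets `Θ` and `K_x` of the paper.
def singularLocus (h : Fin m₁ → MvPolynomial (Fin n) ℝ) (g : Fin m₂ → MvPolynomial (Fin n) ℝ) :
    Set (Fin n → ℂ) :=
  {z | ∃ J : Finset (Fin m₂), J.card ≤ n - m₁ ∧ (∀ i, aeval z (h i) = 0) ∧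
    (∀ j ∈ J, aeval z (g j) = 0) ∧ (constraintJacobian h g J z).rank < m₁ + J.card}

def kktLocus (f : MvPolynomial (Fin n) ℝ) (h : Fin m₁ → MvPolynomial (Fin n) ℝ)
    (g : Fin m₂ → MvPolynomial (Fin n) ℝ) : Set (Fin n → ℂ) :=
  {z | ∃ (lam : Fin m₁ → ℂ) (mu : Fin m₂ → ℂ),
    (∀ k : Fin n, aeval z (pderiv k f) =
      (∑ i, lam i * aeval z (pderiv k (h i))) + ∑ j, mu j * aeval z (pderiv k (g j))) ∧
    (∀ i, aeval z (h i) = 0) ∧ ∀ j, mu j * aeval z (g j) = 0}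

-- Unlike the classical Fritz John conditions, no sign is imposed on `mu`.
structure FritzJohnMultipliers (f : MvPolynomial (Fin n) ℝ) (h : Fin m₁ → MvPolynomial (Fin n) ℝ)
    (g : Fin m₂ → MvPolynomial (Fin n) ℝ) (x : Fin n → ℝ) where
  lam₀ : ℝ
  lam : Fin m₁ → ℝ
  mu : Fin m₂ → ℝ
  ne_zero : (lam₀, lam, mu) ≠ 0
  mu_eq_zero_of_inactive : ∀ j, eval x (g j) ≠ 0 → mu j = 0
  stationary : ∀ k, lam₀ * eval x (pderiv k f) + ∑ i, lam i * eval x (pderiv k (h i)) +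
    ∑ j, mu j * eval x (pderiv k (g j)) = 0

theorem exists_fritzJohnMultipliers (hx : (∀ i, eval x (h i) = 0) ∧ ∀ j, 0 ≤ eval x (g j))
    (hmin : ∀ y : Fin n → ℝ,
      ((∀ i, eval y (h i) = 0) ∧ ∀ j, 0 ≤ eval y (g j)) → eval x f ≤ eval y f) :
    Nonempty (FritzJohnMultipliers f h g x) := by
  obtain ⟨Λ₀, Λ, M, hne, hM, hsum⟩ := IsLocalMinOn.exists_fritzJohn_multipliers
    (F := fun y => eval y f) (H := fun i y => eval y (h i)) (G := fun j y => eval y (g j))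
    (IsMinOn.localize hmin) hx (hasStrictFDerivAt_eval_s12 f x)
    (fun i => hasStrictFDerivAt_eval_s12 (h i) x) (fun j => hasStrictFDerivAt_eval_s12 (g j) x)
  refine ⟨⟨Λ₀, Λ, M, hne, hM, fun k => ?_⟩⟩
  simpa [Pi.single_apply] using congrArg (· (Pi.single k 1)) hsum

namespace FritzJohnMultipliers

theorem sum_coe_sort_mu_mul (FJ : FritzJohnMultipliers f h g x) (hJ : activeSet g x ⊆ J)
    (a : Fin m₂ → ℝ) :
    ∑ j : J, FJ.mu j * a j = ∑ j, FJ.mu j * a j := by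
  rw [Finset.sum_coe_sort J fun j => FJ.mu j * a j]
  refine Finset.sum_subset J.subset_univ fun j _ hj => ?_
  rw [FJ.mu_eq_zero_of_inactive j fun h0 => hj (hJ (mem_activeSet.2 h0)), zero_mul]

theorem mu_eq_zero_of_restrict_eq_zero (FJ : FritzJohnMultipliers f h g x)
    (hJ : activeSet g x ⊆ J) (h0 : ∀ j : J, FJ.mu j = 0) : FJ.mu = 0 := by
  funext j
  by_cases hj : j ∈ J
  · exact h0 ⟨j, hj⟩
  · exact FJ.mu_eq_zero_of_inactive j fun h0 => hj (hJ (mem_activeSet.2 h0))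

theorem rank_constraintJacobian_lt (FJ : FritzJohnMultipliers f h g x) (h0 : FJ.lam₀ = 0) :
    (constraintJacobian h g (activeSet g x) fun i => (x i : ℂ)).rank <
      m₁ + (activeSet g x).card := by
  set A := activeSet g x
  let v : Fin m₁ ⊕ A → ℂ := Sum.elim (fun i => (FJ.lam i : ℂ)) fun j => (FJ.mu j : ℂ)
  have hv : v ≠ 0 := by
    intro hv
    refine FJ.ne_zero ?_
    have hlam : FJ.lam = 0 := funext fun i => by simpa [v] using congrFun hv (.inl i)
    have hmu : FJ.mu = 0 := FJ.mu_eq_zero_of_restrict_eq_zero subset_rfl fun j => by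
      simpa [v] using congrFun hv (.inr j)
    simp [h0, hlam, hmu]
  have hMv : (constraintJacobian h g A fun i => (x i : ℂ)).mulVec v = 0 := by
    ext k
    have := FJ.stationary k
    rw [h0, zero_mul, zero_add, ← FJ.sum_coe_sort_mu_mul subset_rfl] at this
    simp only [constraintJacobian, Matrix.mulVec, dotProduct, Matrix.of_apply,
      Fintype.sum_sum_type, Sum.elim_inl, Sum.elim_inr, aeval_ofReal, v, Pi.zero_apply]
    exact_mod_cast (by simpa only [mul_comm] using this)
  simpa using Matrix.rank_lt_card_width_of_mulVec_eq_zero hv hMv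

theorem ofReal_mem_singularLocus (FJ : FritzJohnMultipliers f h g x) (h0 : FJ.lam₀ = 0)
    (hx : ∀ i, eval x (h i) = 0) (hcard : (activeSet g x).card ≤ n - m₁) :
    (fun i => (x i : ℂ)) ∈ singularLocus h g :=
  ⟨activeSet g x, hcard, fun i => by simp [aeval_ofReal, hx i],
    fun j hj => by simpa [aeval_ofReal] using hj, FJ.rank_constraintJacobian_lt h0⟩

theorem rank_augmentedJacobian_le (FJ : FritzJohnMultipliers f h g x) (hJ : activeSet g x ⊆ J) :
    (augmentedJacobian f h g J fun i => (x i : ℂ)).rank ≤ m₁ + J.card := by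
  let v : Unit ⊕ Fin m₁ ⊕ J → ℂ :=
    Sum.elim (fun _ => (FJ.lam₀ : ℂ)) (Sum.elim (fun i => (FJ.lam i : ℂ)) fun j => (FJ.mu j : ℂ))
  have hv : v ≠ 0 := by
    intro hv
    refine FJ.ne_zero ?_
    have hlam₀ : FJ.lam₀ = 0 := by simpa [v] using congrFun hv (.inl ())
    have hlam : FJ.lam = 0 := funext fun i => by simpa [v] using congrFun hv (.inr (.inl i))
    have hmu : FJ.mu = 0 := FJ.mu_eq_zero_of_restrict_eq_zero hJ fun j => by
      simpa [v] using congrFun hv (.inr (.inr j))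
    simp [hlam₀, hlam, hmu]
  have hMv : (augmentedJacobian f h g J fun i => (x i : ℂ)).mulVec v = 0 := by
    ext k
    have := FJ.stationary k
    rw [← FJ.sum_coe_sort_mu_mul hJ] at this
    simp only [augmentedJacobian, Matrix.mulVec, dotProduct, Matrix.of_apply,
      Fintype.sum_sum_type, Fintype.sum_unique, Sum.elim_inl, Sum.elim_inr, aeval_ofReal, v,
      Pi.zero_apply]
    exact_mod_cast (by simpa only [mul_comm, add_assoc] using this)
  have := Matrix.rank_lt_card_width_of_mulVec_eq_zero hv hMv
  simp at this
  omega

theorem ofReal_mem_kktLocus (FJ : FritzJohnMultipliers f h g x) (h0 : FJ.lam₀ ≠ 0)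
    (hx : ∀ i, eval x (h i) = 0) :
    (fun i => (x i : ℂ)) ∈ kktLocus f h g := by
  refine ⟨fun i => (-FJ.lam i / FJ.lam₀ : ℝ), fun j => (-FJ.mu j / FJ.lam₀ : ℝ), fun k => ?_,
    fun i => by simp [aeval_ofReal, hx i], fun j => ?_⟩
  · have := FJ.stationary k
    simp only [aeval_ofReal]
    norm_cast
    simp only [neg_div, neg_mul, div_mul_eq_mul_div, ← Finset.sum_div, Finset.sum_neg_distrib]
    field_simp
    linarith
  · by_cases hj : eval x (g j) = 0
    · simp [aeval_ofReal, hj]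
    · simp [FJ.mu_eq_zero_of_inactive j hj]

end FritzJohnMultipliers

end PolynomialProgram

theorem minimizer_in_W_and_augmented_inf_eq_general
    (n m₁ m₂ : ℕ)
    (f : MvPolynomial (Fin n) ℝ)
    (h : Fin m₁ → MvPolynomial (Fin n) ℝ) (g : Fin m₂ → MvPolynomial (Fin n) ℝ)
    (hfeas : ∀ u : Fin n → ℝ,
      ((∀ i, eval u (h i) = 0) ∧ ∀ j, 0 ≤ eval u (g j)) →
        Nat.card {j : Fin m₂ // eval u (g j) = 0} ≤ n - m₁)
    (len : Finset (Fin m₂) → ℕ)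
    (η : (J : Finset (Fin m₂)) → Fin (len J) → MvPolynomial (Fin n) ℝ)
    (hη : ∀ J : Finset (Fin m₂), J.card ≤ min (m₁ + m₂) (n - 1) - m₁ →
      {x : Fin n → ℂ | ∀ i, aeval x (η J i) = 0} =
        {x : Fin n → ℂ |
          Matrix.rank (Matrix.of fun (k : Fin n) (c : Unit ⊕ Fin m₁ ⊕ {j // j ∈ J}) =>
            Sum.elim (fun _ => aeval x (pderiv k f))
              (Sum.elim (fun i => aeval x (pderiv k (h i)))
                (fun j => aeval x (pderiv k (g j.1)))) c) ≤ m₁ + J.card})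
    (xstar : Fin n → ℝ)
    (hxstarfeas : (∀ i, eval xstar (h i) = 0) ∧ ∀ j, 0 ≤ eval xstar (g j))
    (hxstarmin : ∀ y : Fin n → ℝ,
      ((∀ i, eval y (h i) = 0) ∧ ∀ j, 0 ≤ eval y (g j)) →
        eval xstar f ≤ eval y f) :
    (fun i => (xstar i : ℂ)) ∈
      ({x : Fin n → ℂ | ∃ J : Finset (Fin m₂), J.card ≤ n - m₁ ∧
          (∀ i, aeval x (h i) = 0) ∧ (∀ j ∈ J, aeval x (g j) = 0) ∧
          Matrix.rank (Matrix.of fun (k : Fin n) (c : Fin m₁ ⊕ {j // j ∈ J}) =>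
            Sum.elim (fun i => aeval x (pderiv k (h i)))
              (fun j => aeval x (pderiv k (g j.1))) c) < m₁ + J.card} ∪
        {x : Fin n → ℂ | ∃ (lam : Fin m₁ → ℂ) (mu : Fin m₂ → ℂ),
          (∀ k : Fin n, aeval x (pderiv k f) =
            (∑ i, lam i * aeval x (pderiv k (h i))) +
              ∑ j, mu j * aeval x (pderiv k (g j))) ∧
          (∀ i, aeval x (h i) = 0) ∧ ∀ j, mu j * aeval x (g j) = 0}) ∧
    IsLeast {v : ℝ | ∃ x : Fin n → ℝ,
        ((∀ i, eval x (h i) = 0) ∧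
          (∀ J : Finset (Fin m₂), J.card ≤ min (m₁ + m₂) (n - 1) - m₁ →
            ∀ i, eval x (η J i) * ∏ j ∈ Jᶜ, eval x (g j) = 0) ∧
          ∀ ν : Finset (Fin m₂), 0 ≤ ∏ j ∈ ν, eval x (g j)) ∧
        v = eval x f}
      (eval xstar f) := by
  obtain ⟨FJ⟩ := exists_fritzJohnMultipliers hxstarfeas hxstarmin
  have hmem : (fun i => (xstar i : ℂ)) ∈ singularLocus h g ∪ kktLocus f h g := by
    by_cases h0 : FJ.lam₀ = 0
    · exact .inl (FJ.ofReal_mem_singularLocus h0 hxstarfeas.1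
        (card_activeSet.trans_le (hfeas xstar hxstarfeas)))
    · exact .inr (FJ.ofReal_mem_kktLocus h0 hxstarfeas.1)
  refine ⟨hmem, ⟨xstar, ⟨hxstarfeas.1, fun J hJ i => ?_,
    fun ν => Finset.prod_nonneg fun j _ => hxstarfeas.2 j⟩, rfl⟩, ?_⟩
  · by_cases hJ₀ : activeSet g xstar ⊆ J
    · have hzero : (fun i => (xstar i : ℂ)) ∈ {x : Fin n → ℂ | ∀ i, aeval x (η J i) = 0} := by
        rw [hη J hJ]
        exact FJ.rank_augmentedJacobian_le hJ₀
      have := hzero i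
      rw [aeval_ofReal, Complex.ofReal_eq_zero] at this
      rw [this, zero_mul]
    · obtain ⟨j, hj, hjJ⟩ := Finset.not_subset.1 hJ₀
      exact mul_eq_zero_of_right _
        (Finset.prod_eq_zero (Finset.mem_compl.2 hjJ) (mem_activeSet.1 hj))
  · rintro v ⟨x, ⟨hh, -, hν⟩, rfl⟩
    exact hxstarmin x ⟨hh, fun j => by simpa using hν {j}⟩

/-- under (i) `m₁ ≤ n` and (ii) at most `n − m₁` of the `gⱼ`
vanish at any feasible point, if `f_min` is attained at `x*`, then `x*` belongs
to `W = Θ ∪ K_x`, and consequently the infimum `f*` of `f` over the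
Jacobian-augmented feasible set equals `f_min`. -/
theorem minimizer_in_W_and_augmented_inf_eq
    (n m₁ m₂ : ℕ)
    (f : MvPolynomial (Fin n) ℝ)
    (h : Fin m₁ → MvPolynomial (Fin n) ℝ) (g : Fin m₂ → MvPolynomial (Fin n) ℝ)
    (hm : m₁ ≤ n)
    (hfeas : ∀ u : Fin n → ℝ,
      ((∀ i, eval u (h i) = 0) ∧ ∀ j, 0 ≤ eval u (g j)) →
        Nat.card {j : Fin m₂ // eval u (g j) = 0} ≤ n - m₁)
    (len : Finset (Fin m₂) → ℕ)
    (η : (J : Finset (Fin m₂)) → Fin (len J) → MvPolynomial (Fin n) ℝ)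
    (hη : ∀ J : Finset (Fin m₂), J.card ≤ min (m₁ + m₂) (n - 1) - m₁ →
      {x : Fin n → ℂ | ∀ i, aeval x (η J i) = 0} =
        {x : Fin n → ℂ |
          Matrix.rank (Matrix.of fun (k : Fin n) (c : Unit ⊕ Fin m₁ ⊕ {j // j ∈ J}) =>
            Sum.elim (fun _ => aeval x (pderiv k f))
              (Sum.elim (fun i => aeval x (pderiv k (h i)))
                (fun j => aeval x (pderiv k (g j.1)))) c) ≤ m₁ + J.card})
    (xstar : Fin n → ℝ)
    (hxstarfeas : (∀ i, eval xstar (h i) = 0) ∧ ∀ j, 0 ≤ eval xstar (g j))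
    (hxstarmin : ∀ y : Fin n → ℝ,
      ((∀ i, eval y (h i) = 0) ∧ ∀ j, 0 ≤ eval y (g j)) →
        eval xstar f ≤ eval y f) :
    (fun i => (xstar i : ℂ)) ∈
      ({x : Fin n → ℂ | ∃ J : Finset (Fin m₂), J.card ≤ n - m₁ ∧
          (∀ i, aeval x (h i) = 0) ∧ (∀ j ∈ J, aeval x (g j) = 0) ∧
          Matrix.rank (Matrix.of fun (k : Fin n) (c : Fin m₁ ⊕ {j // j ∈ J}) =>
            Sum.elim (fun i => aeval x (pderiv k (h i)))
              (fun j => aeval x (pderiv k (g j.1))) c) < m₁ + J.card} ∪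
        {x : Fin n → ℂ | ∃ (lam : Fin m₁ → ℂ) (mu : Fin m₂ → ℂ),
          (∀ k : Fin n, aeval x (pderiv k f) =
            (∑ i, lam i * aeval x (pderiv k (h i))) +
              ∑ j, mu j * aeval x (pderiv k (g j))) ∧
          (∀ i, aeval x (h i) = 0) ∧ ∀ j, mu j * aeval x (g j) = 0}) ∧
    IsLeast {v : ℝ | ∃ x : Fin n → ℝ,
        ((∀ i, eval x (h i) = 0) ∧
          (∀ J : Finset (Fin m₂), J.card ≤ min (m₁ + m₂) (n - 1) - m₁ →
            ∀ i, eval x (η J i) * ∏ j ∈ Jᶜ, eval x (g j) = 0) ∧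
          ∀ ν : Finset (Fin m₂), 0 ≤ ∏ j ∈ ν, eval x (g j)) ∧
        v = eval x f}
      (eval xstar f) :=
  minimizer_in_W_and_augmented_inf_eq_general n m₁ m₂ f h g hfeas len η hη xstar hxstarfeas
    hxstarmin
end

section
/- For every ε > 0, the polynomial identity f(x₁,x₂) + ε = σ₀(x₁,x₂) + ψ(x₁,x₂)h(x₁,x₂) + φ(x₁,x₂)φ̂(x₁,x₂) holds, where f = x₁x₂² + x₁, h = −x₁³ + x₂², φ̂ = 2x₂(x₂²+1) + 6x₁³x₂, σ₀(x₁,x₂) = 16(ε + (x₁x₂²+x₁+1)²/4 + (x₁x₂²+x₁−1)²x₂²)x₁⁶ + ε(4x₁³+1)²(1 + (x₁x₂²+x₁)/(2ε) − (x₁x₂²+x₁)²/(8ε²))², and ψ, φ are the explicit polynomials given in the paper. In particular σ₀ is a sum of squares (times nonnegative constants), certifying f + ε ≥ 0 on {h = 0, φ̂ = 0}. -/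
set_option maxHeartbeats 2000000 in
/-- the explicit degree-20 Positivstellensatz certificate
`f + ε = σ₀ + ψ·h + φ·φ̂` for `f = x₁x₂² + x₁`, `h = −x₁³ + x₂²`,
`φ̂ = 2x₂(x₂²+1) + 6x₁³x₂`, with `σ₀` a sum of squares, valid for every
`ε > 0`; in particular it certifies `f + ε ≥ 0` on `{h = 0, φ̂ = 0}`. -/
theorem explicit_certificate (e : ℝ) (he : 0 < e) (x y : ℝ)
    (fval : ℝ) (hf : fval = x * y ^ 2 + x)
    (hval : ℝ) (hh : hval = -x ^ 3 + y ^ 2)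
    (phat : ℝ) (hphat : phat = 2 * y * (y ^ 2 + 1) + 6 * x ^ 3 * y)
    (sig : ℝ)
    (hsig : sig =
      16 * (e + (x * y ^ 2 + x + 1) ^ 2 / 4 + (x * y ^ 2 + x - 1) ^ 2 * y ^ 2) * x ^ 6 +
        e * (4 * x ^ 3 + 1) ^ 2 *
          (1 + (x * y ^ 2 + x) / (2 * e) - (x * y ^ 2 + x) ^ 2 / (8 * e ^ 2)) ^ 2)
    (psi : ℝ)
    (hpsi : psi =
      8 * x + 8 * e - 12 * x ^ 8 * y ^ 4 - 24 * x ^ 8 * y ^ 2 + 24 * x ^ 7 * y ^ 2 +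
        8 * x * y ^ 2 + 4 * x ^ 3 + 32 * e * x ^ 3 - x ^ 3 / e ^ 2 +
        x ^ 4 / (8 * e ^ 3) - 2 * x ^ 6 / e ^ 2 + x ^ 7 / (4 * e ^ 3) +
        8 * e * y ^ 2 + x * y ^ 2 / (64 * e ^ 3) - y ^ 2 / (8 * e ^ 2) +
        x / (64 * e ^ 3) - 1 / (8 * e ^ 2) + 4 * x ^ 3 * y ^ 2 +
        4 * x ^ 5 * y ^ 2 + 4 * x ^ 5 + 24 * x ^ 4 -
        243 * x ^ 10 * y ^ 2 / (256 * e ^ 3) - 3 * x ^ 10 * y ^ 6 / (16 * e ^ 3) -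
        45 * x ^ 7 * y ^ 4 / (128 * e ^ 3) - 311 * x ^ 7 * y ^ 2 / (1024 * e ^ 3) -
        3 * x ^ 7 * y ^ 6 / (32 * e ^ 3) + 3 * x ^ 3 * y ^ 4 / (32 * e ^ 2) +
        33 * x ^ 9 * y ^ 2 / (8 * e ^ 2) + 29 * x ^ 6 * y ^ 2 / (32 * e ^ 2) -
        45 * x ^ 4 * y ^ 4 / (1024 * e ^ 3) - 45 * x ^ 10 * y ^ 4 / (64 * e ^ 3) -
        17 * x ^ 3 * y ^ 2 / (32 * e ^ 2) + 3 * x ^ 9 * y ^ 4 / (2 * e ^ 2) +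
        3 * x ^ 6 * y ^ 4 / (4 * e ^ 2) + 47 * x ^ 4 * y ^ 2 / (1024 * e ^ 3) -
        3 * x ^ 4 * y ^ 6 / (256 * e ^ 3))
    (phi : ℝ)
    (hphi : phi =
      -(x ^ 10 * y ^ 5) / (32 * e ^ 3) - 15 * x ^ 10 * y ^ 3 / (128 * e ^ 3) +
        x ^ 9 * y ^ 3 / (4 * e ^ 2) - x ^ 7 * y ^ 5 / (64 * e ^ 3) -
        81 * x ^ 10 * y / (512 * e ^ 3) - 2 * x ^ 8 * y ^ 3 +
        11 * x ^ 9 * y / (16 * e ^ 2) - 15 * x ^ 7 * y ^ 3 / (256 * e ^ 3) -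
        4 * x ^ 8 * y + x ^ 6 * y ^ 3 / (8 * e ^ 2) -
        x ^ 4 * y ^ 5 / (512 * e ^ 3) - 337 * x ^ 7 * y / (2048 * e ^ 3) +
        4 * x ^ 7 * y + 59 * x ^ 6 * y / (64 * e ^ 2) -
        15 * x ^ 4 * y ^ 3 / (2048 * e ^ 3) - 2 * x ^ 5 * y +
        x ^ 3 * y ^ 3 / (64 * e ^ 2) - x ^ 4 * y / (16 * e ^ 3) +
        7 * x ^ 3 * y / (16 * e ^ 2) - 2 * x ^ 3 * y - 4 * x * y -
        x * y / (128 * e ^ 3) + y / (16 * e ^ 2) - 4 * e * y) :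
    fval + e = sig + psi * hval + phi * phat ∧
      0 ≤ sig ∧ (hval = 0 → phat = 0 → 0 ≤ fval + e) := by
  have he' : e ≠ 0 := ne_of_gt he
  have hid : fval + e = sig + psi * hval + phi * phat := by
    subst hf hh hphat hsig hpsi hphi
    field_simp
    ring
  have hs : 0 ≤ sig := by
    rw [hsig]
    positivity
  exact ⟨hid, hs, fun h1 h2 => by simp [hid, h1, h2, hs]⟩
end

section
/- The infimum of r(x₁,x₂) = (x₁⁶ + x₂⁶ + 3x₁²x₂² + 1)/(x₁²(x₂⁴+1) + x₂²(x₁⁴+1) + x₁⁴ + x₂⁴) over points of ℝ² where the denominator is positive equals 1, and r(1,1) = 1, so the infimum is attained. -/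
set_option maxHeartbeats 2000000 in
theorem robinson_num_ge_den (x y : ℝ) :
    x ^ 2 * (y ^ 4 + 1) + y ^ 2 * (x ^ 4 + 1) + x ^ 4 + y ^ 4 ≤
      x ^ 6 + y ^ 6 + 3 * x ^ 2 * y ^ 2 + 1 := by
  nlinarith [sq_nonneg (x*(x^2-1)), sq_nonneg (y*(y^2-1)), sq_nonneg (x*(y^2-1)),
    sq_nonneg (y*(x^2-1)), sq_nonneg ((x^2-1)*(y^2-1)), sq_nonneg (x*y*(x^2-y^2)),
    sq_nonneg (x^2*(x^2-1)), sq_nonneg (y^2*(y^2-1)), sq_nonneg (x*y*(x^2-1)),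
    sq_nonneg (x*y*(y^2-1)), sq_nonneg (x^2-y^2), sq_nonneg (x^2+y^2-2),
    sq_nonneg (x^2*y^2-1), sq_nonneg x, sq_nonneg y, sq_nonneg (x*y)]

/-- the infimum of
`(x₁⁶ + x₂⁶ + 3x₁²x₂² + 1)/(x₁²(x₂⁴+1) + x₂²(x₁⁴+1) + x₁⁴ + x₂⁴)` over points
where the denominator is positive equals `1`, and it is attained at `(1,1)`. -/
theorem robinson_rational_min :
    IsLeast
      {v : ℝ | ∃ x y : ℝ,
        0 < x ^ 2 * (y ^ 4 + 1) + y ^ 2 * (x ^ 4 + 1) + x ^ 4 + y ^ 4 ∧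
        v = (x ^ 6 + y ^ 6 + 3 * x ^ 2 * y ^ 2 + 1) /
          (x ^ 2 * (y ^ 4 + 1) + y ^ 2 * (x ^ 4 + 1) + x ^ 4 + y ^ 4)}
      1 := by
  constructor
  · exact ⟨1, 1, by norm_num, by norm_num⟩
  · rintro v ⟨x, y, hd, rfl⟩
    rw [le_div_iff₀ hd, one_mul]
    exact robinson_num_ge_den x y
end
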